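/- arXiv:math/9410213 — 5 statements merged into one kernel-verified Lean document; each statement's English description precedes it below -/
import Mathlib

section
/- The area of the plane region {(x,y) ∈ ℝ² : |x·y·(x−y)| ≤ 1} is exactly 3·B(1/3,1/3), where B denotes the Beta function. -/
/-!
For `F` homogeneous of degree `d`, the substitution `(x, y) = (t y, y)`, of Jacobian `|y|`, turns
the area of `|F| ≤ 1` into `∫ |F(t, 1)|^(-2/d) dt`: for fixed `t` the admissible `y` fill the
interval `|y| ≤ |F(t, 1)|^(-1/d)`. For `F = XY(X - Y)` this is `∫ |t(t - 1)|^(-2/3) dt`. The Möbius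
map `t ↦ 1/(1 - t)` preserves the measure `|t(t - 1)|^(-2/3) dt` and permutes the intervals
`(-∞, 0)`, `(0, 1)`, `(1, ∞)` cyclically, so the integral is three times the Beta integral
over `(0, 1)`.
-/

open MeasureTheory
open scoped ENNReal

/-- The Beta function `B(x,y) = Γ(x)Γ(y)/Γ(x+y)`. -/
noncomputable def Beta (x y : ℝ) : ℝ := Real.Gamma x * Real.Gamma y / Real.Gamma (x + y)

open Set

lemma lintegral_eq_lintegral_lintegral_mul (g : ℝ × ℝ → ℝ≥0∞) (hg : Measurable g) :
    ∫⁻ p, g p = ∫⁻ t, ∫⁻ y, ‖y‖ₑ * g (t * y, y) := calc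
  ∫⁻ p, g p = ∫⁻ y, ∫⁻ x, g (x, y) := by rw [Measure.volume_eq_prod, lintegral_prod_symm' g hg]
  _ = ∫⁻ y, ∫⁻ t, ‖y‖ₑ * g (t * y, y) := by
    refine lintegral_congr_ae ((Measure.ae_ne volume 0).mono fun y hy => ?_)
    dsimp only
    conv_lhs => rw [← Real.smul_map_volume_mul_right hy]
    rw [lintegral_smul_measure, lintegral_map (by fun_prop) (measurable_mul_const y),
      lintegral_const_mul _ (by fun_prop), Real.enorm_eq_ofReal_abs, smul_eq_mul]
  _ = ∫⁻ t, ∫⁻ y, ‖y‖ₑ * g (t * y, y) :=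
    lintegral_lintegral_swap (by fun_prop)

lemma setLIntegral_Icc_neg_enorm {R : ℝ} (hR : 0 ≤ R) :
    ∫⁻ y in Icc (-R) R, ‖y‖ₑ = ENNReal.ofReal (R ^ 2) := by
  have half : ∫ y in (0 : ℝ)..R, |y| = R ^ 2 / 2 := by
    rw [intervalIntegral.integral_congr (g := fun y => y) fun y hy => abs_of_nonneg ?_,
      integral_id]
    · ring
    · exact (uIcc_of_le hR ▸ hy).1
  have total : ∫ y in Icc (-R) R, |y| = R ^ 2 := by
    rw [integral_Icc_eq_integral_Ioc, ← intervalIntegral.integral_of_le (by linarith),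
      ← intervalIntegral.integral_add_adjacent_intervals (b := 0)
        (continuous_abs.intervalIntegrable _ _) (continuous_abs.intervalIntegrable _ _)]
    have neg_half := intervalIntegral.integral_comp_neg (a := 0) (b := R) (fun y : ℝ => |y|)
    simp only [abs_neg, neg_zero] at neg_half
    rw [← neg_half, half]
    ring
  simp_rw [Real.enorm_eq_ofReal_abs]
  rw [← total, ofReal_integral_eq_lintegral_ofReal continuous_abs.integrableOn_Icc
    (ae_of_all _ fun y => abs_nonneg y)]

-- For `c = 0` the integral diverges, matching `0 ^ (-2/d) = ⊤` in `ℝ≥0∞`.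
lemma setLIntegral_enorm_mul_pow_le_one {c : ℝ} (hc : 0 ≤ c) {d : ℕ} (hd : d ≠ 0) :
    ∫⁻ y in {y : ℝ | c * |y| ^ d ≤ 1}, ‖y‖ₑ = ENNReal.ofReal c ^ (-(2 / d : ℝ)) := by
  have hd' : (0 : ℝ) < d := by exact_mod_cast Nat.pos_of_ne_zero hd
  rcases hc.eq_or_lt with rfl | hc
  · rw [ENNReal.ofReal_zero, ENNReal.zero_rpow_of_neg (by simp [hd']), eq_top_iff]
    calc ⊤ = ∫⁻ y in Ici (1 : ℝ), 1 := by simp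
      _ ≤ ∫⁻ y in Ici (1 : ℝ), ‖y‖ₑ := setLIntegral_mono (by fun_prop) fun y hy => by
          simpa [Real.enorm_eq_ofReal_abs] using le_abs.2 (Or.inl hy)
      _ ≤ _ := lintegral_mono_set (by simp)
  · set R := c ^ (-(1 / d : ℝ)) with hR
    have hR0 : 0 ≤ R := Real.rpow_nonneg hc.le _
    have hset : {y : ℝ | c * |y| ^ d ≤ 1} = Icc (-R) R := by
      ext y
      have hRd : R ^ d = c⁻¹ := by
        rw [hR, ← Real.rpow_natCast, ← Real.rpow_mul hc.le, neg_mul, one_div,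
          inv_mul_cancel₀ hd'.ne', Real.rpow_neg_one]
      rw [mem_Icc, ← abs_le, mem_ofPred_eq, ← pow_le_pow_iff_left₀ (abs_nonneg y) hR0 hd, hRd,
        ← one_div, le_div_iff₀ hc, mul_comm]
    rw [hset, setLIntegral_Icc_neg_enorm hR0, ENNReal.ofReal_rpow_of_pos hc, hR,
      ← Real.rpow_natCast, ← Real.rpow_mul hc.le]
    congr 2
    push_cast
    ring

theorem volume_abs_le_one_of_isHomogeneous {F : ℝ × ℝ → ℝ} (hF : Measurable F) {d : ℕ}
    (hd : d ≠ 0) (hhom : ∀ (c : ℝ) (p : ℝ × ℝ), F (c • p) = c ^ d * F p) :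
    volume {p | |F p| ≤ 1} = ∫⁻ t, ‖F (t, 1)‖ₑ ^ (-(2 / d : ℝ)) := by
  have hS : MeasurableSet {p | |F p| ≤ 1} := measurableSet_le (by fun_prop) measurable_const
  rw [← lintegral_indicator_one hS,
    lintegral_eq_lintegral_lintegral_mul _ (measurable_one.indicator hS)]
  refine lintegral_congr fun t => ?_
  have hslice : ∀ y, |F (t * y, y)| = |F (t, 1)| * |y| ^ d := fun y => by
    rw [show (t * y, y) = y • (t, 1) by simp [mul_comm], hhom, abs_mul, abs_pow, mul_comm]
  rw [Real.enorm_eq_ofReal_abs, ← setLIntegral_enorm_mul_pow_le_one (abs_nonneg (F (t, 1))) hd,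
    ← lintegral_indicator (measurableSet_le (by fun_prop) measurable_const)]
  refine lintegral_congr fun y => ?_
  simp only [indicator_apply, mem_ofPred_eq, hslice, Pi.one_apply, mul_ite, mul_one, mul_zero]

lemma setLIntegral_Ioo_rpow_mul_one_sub_rpow {a b : ℝ} (ha : 0 < a) (hb : 0 < b) :
    ∫⁻ t in Ioo 0 1, ENNReal.ofReal (t ^ (a - 1) * (1 - t) ^ (b - 1)) =
      ENNReal.ofReal (Beta a b) := by
  set f : ℝ → ℝ := fun t => t ^ (a - 1) * (1 - t) ^ (b - 1)
  have hf : EqOn (fun t : ℝ => (t : ℂ) ^ ((a : ℂ) - 1) * (1 - (t : ℂ)) ^ ((b : ℂ) - 1))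
      (fun t => (f t : ℂ)) (Icc 0 1) := fun t ht => by
    have h1t : 0 ≤ 1 - t := sub_nonneg.2 ht.2
    simp only [f, Complex.ofReal_mul, Complex.ofReal_cpow ht.1, Complex.ofReal_cpow h1t]
    push_cast
    rfl
  have hconv := Complex.betaIntegral_convergent (u := a) (v := b) (by simpa) (by simpa)
  have hint : IntegrableOn f (Ioc 0 1) := by
    simpa [IntegrableOn] using
      (hconv.1.congr_fun (hf.mono Ioc_subset_Icc_self) measurableSet_Ioc).re
  have hGamma := Complex.Gamma_mul_Gamma_eq_betaIntegral (s := a) (t := b) (by simpa) (by simpa)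
  rw [Complex.betaIntegral, intervalIntegral.integral_congr (uIcc_of_le (zero_le_one' ℝ) ▸ hf),
    intervalIntegral.integral_ofReal, ← Complex.ofReal_add, Complex.Gamma_ofReal,
    Complex.Gamma_ofReal, Complex.Gamma_ofReal, ← Complex.ofReal_mul, ← Complex.ofReal_mul,
    Complex.ofReal_inj, intervalIntegral.integral_of_le zero_le_one] at hGamma
  rw [setLIntegral_congr Ioo_ae_eq_Ioc, ← ofReal_integral_eq_lintegral_ofReal hint
    (ae_restrict_of_forall_mem measurableSet_Ioc fun t ht =>
      mul_nonneg (Real.rpow_nonneg ht.1.le _) (Real.rpow_nonneg (sub_nonneg.2 ht.2) _)), Beta,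
    hGamma, mul_div_cancel_left₀ _ (Real.Gamma_pos_of_pos (add_pos ha hb)).ne']

lemma ofReal_inv_sq_mul_enorm_rpow_inv_one_sub {t : ℝ} (ht : t < 1) :
    ENNReal.ofReal ((1 - t) ^ 2)⁻¹ * ‖(1 - t)⁻¹ * ((1 - t)⁻¹ - 1)‖ₑ ^ (-(2 / 3 : ℝ)) =
      ‖t * (t - 1)‖ₑ ^ (-(2 / 3 : ℝ)) := by
  rcases eq_or_ne t 0 with rfl | ht0
  · simp
  set u := 1 - t
  set p : ℝ := -(2 / 3)
  have hu : 0 < u := sub_pos.2 ht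
  have ht' : 0 < |t| := abs_pos.2 ht0
  have h_image : |u⁻¹ * (u⁻¹ - 1)| = |t| / u ^ 2 := by
    rw [show u⁻¹ * (u⁻¹ - 1) = t / u ^ 2 by field_simp; ring, abs_div, abs_of_pos (pow_pos hu 2)]
  have h_weight : |t * (t - 1)| = |t| * u := by
    rw [show t * (t - 1) = -(t * u) by ring, abs_neg, abs_mul, abs_of_pos hu]
  have h_jacobian : (u ^ 2)⁻¹ = u ^ p * (u ^ 2) ^ p := by
    rw [← Real.rpow_natCast, ← Real.rpow_mul hu.le, ← Real.rpow_add hu, ← Real.rpow_neg hu.le]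
    norm_num [p]
  rw [Real.enorm_eq_ofReal_abs, Real.enorm_eq_ofReal_abs, h_image, h_weight,
    ENNReal.ofReal_rpow_of_pos (div_pos ht' (pow_pos hu 2)),
    ENNReal.ofReal_rpow_of_pos (mul_pos ht' hu), ← ENNReal.ofReal_mul (by positivity),
    h_jacobian, Real.div_rpow ht'.le (pow_pos hu 2).le, Real.mul_rpow ht'.le hu.le]
  congr 1
  field_simp

lemma setLIntegral_image_inv_one_sub {s : Set ℝ} (hs : MeasurableSet s) (hs1 : s ⊆ Iio 1) :
    ∫⁻ t in (fun t => (1 - t)⁻¹) '' s, ‖t * (t - 1)‖ₑ ^ (-(2 / 3 : ℝ)) =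
      ∫⁻ t in s, ‖t * (t - 1)‖ₑ ^ (-(2 / 3 : ℝ)) := by
  have hderiv : ∀ t ∈ s, HasDerivWithinAt (fun t => (1 - t)⁻¹) ((1 - t) ^ 2)⁻¹ s t :=
    fun t ht => by
      have h := ((hasDerivAt_id' t).const_sub 1).inv (sub_ne_zero.2 (hs1 ht).ne')
      exact (h.congr_deriv (by rw [neg_neg, one_div])).hasDerivWithinAt
  rw [lintegral_image_eq_lintegral_abs_deriv_mul hs hderiv
    (inv_injective.comp (sub_right_injective (b := (1 : ℝ)))).injOn]
  refine setLIntegral_congr_fun hs fun t ht => ?_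
  rw [abs_of_pos (inv_pos.2 (pow_pos (sub_pos.2 (hs1 ht)) 2)),
    ofReal_inv_sq_mul_enorm_rpow_inv_one_sub (hs1 ht)]

lemma setLIntegral_Ioo_enorm_mul_sub_one_rpow :
    ∫⁻ t in Ioo (0 : ℝ) 1, ‖t * (t - 1)‖ₑ ^ (-(2 / 3 : ℝ)) =
      ENNReal.ofReal (Beta (1 / 3) (1 / 3)) := by
  rw [← setLIntegral_Ioo_rpow_mul_one_sub_rpow (by norm_num) (by norm_num)]
  refine setLIntegral_congr_fun measurableSet_Ioo fun t ht => ?_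
  have h1t : 0 < 1 - t := sub_pos.2 ht.2
  rw [Real.enorm_eq_ofReal_abs, show |t * (t - 1)| = t * (1 - t) by
      rw [abs_of_neg (mul_neg_of_pos_of_neg ht.1 (by linarith))]; ring,
    ENNReal.ofReal_rpow_of_pos (mul_pos ht.1 h1t), Real.mul_rpow ht.1.le h1t.le]
  norm_num

lemma lintegral_eq_setLIntegral_Iio_add_Ioo_add_Ioi (f : ℝ → ℝ≥0∞) {a b : ℝ} (hab : a ≤ b) :
    ∫⁻ t, f t = (∫⁻ t in Iio a, f t) + (∫⁻ t in Ioo a b, f t) + ∫⁻ t in Ioi b, f t := by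
  have h_cover : (Iio a ∪ Ioo a b ∪ Ioi b : Set ℝ) =ᵐ[volume] (univ : Set ℝ) := by
    rw [ae_eq_univ]
    refine measure_mono_null (t := {a, b}) (fun t ht => ?_) ((toFinite _).measure_zero _)
    simp only [mem_compl_iff, mem_union, mem_Iio, mem_Ioo, mem_Ioi, not_or, not_and,
      not_lt] at ht
    obtain ⟨⟨h_ge, h_le_of_gt⟩, h_le⟩ := ht
    rcases h_ge.eq_or_lt with h | h
    · exact Or.inl h.symm
    · exact Or.inr (le_antisymm h_le (h_le_of_gt h))
  have h_disj : Disjoint (Iio a) (Ioo a b) :=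
    disjoint_left.2 fun t h₀ h₁ => lt_irrefl t (h₀.trans h₁.1)
  have h_disj' : Disjoint (Iio a ∪ Ioo a b) (Ioi b) :=
    disjoint_left.2 fun t h₀ h₁ => by
      rcases h₀ with h₀ | h₀
      · exact lt_irrefl t (h₀.trans (hab.trans_lt h₁))
      · exact lt_irrefl t (h₀.2.trans h₁)
  rw [← setLIntegral_univ, ← setLIntegral_congr h_cover,
    lintegral_union measurableSet_Ioi h_disj', lintegral_union measurableSet_Ioo h_disj]

lemma lintegral_enorm_mul_sub_one_rpow :
    ∫⁻ t : ℝ, ‖t * (t - 1)‖ₑ ^ (-(2 / 3 : ℝ)) = 3 * ENNReal.ofReal (Beta (1 / 3) (1 / 3)) := by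
  have h_neg : (fun t : ℝ => (1 - t)⁻¹) '' Iio 0 = Ioo 0 1 := by
    rw [← image_image (·⁻¹) (1 - ·), image_const_sub_Iio, image_inv_eq_inv, sub_zero,
      inv_Ioi₀ one_pos, inv_one]
  have h_pos : (fun t : ℝ => (1 - t)⁻¹) '' Ioo 0 1 = Ioi 1 := by
    rw [← image_image (·⁻¹) (1 - ·), image_const_sub_Ioo, image_inv_eq_inv, sub_zero, sub_self,
      inv_Ioo_0_left one_pos, inv_one]
  rw [lintegral_eq_setLIntegral_Iio_add_Ioo_add_Ioi _ zero_le_one,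
    ← h_pos, setLIntegral_image_inv_one_sub measurableSet_Ioo fun _ ht => ht.2,
    ← setLIntegral_image_inv_one_sub measurableSet_Iio fun _ ht => mem_Iio.2 (ht.trans zero_lt_one),
    h_neg, setLIntegral_Ioo_enorm_mul_sub_one_rpow]
  ring

/-- The area of the plane region `{(x,y) : |x·y·(x-y)| ≤ 1}` is exactly `3·B(1/3,1/3)`. -/
theorem area_xy_x_sub_y :
    volume {p : ℝ × ℝ | |p.1 * p.2 * (p.1 - p.2)| ≤ 1}
      = ENNReal.ofReal (3 * Beta (1/3) (1/3)) := by
  rw [volume_abs_le_one_of_isHomogeneous (d := 3) (by fun_prop) three_ne_zero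
    fun c p => by simp only [Prod.smul_fst, Prod.smul_snd, smul_eq_mul]; ring]
  simp only [mul_one, Nat.cast_ofNat]
  rw [lintegral_enorm_mul_sub_one_rpow, ENNReal.ofReal_mul zero_le_three, ENNReal.ofReal_ofNat]
end

section
/- For n ≥ 3 let M_n denote the supremum of |D_F|^{1/(n(n−1))} · A_F over all binary forms F of degree n with complex coefficients and non-zero discriminant. Then the sequence {M_n} is decreasing: M_{n+1} ≤ M_n for all n ≥ 3. -/
open MeasureTheory Finset
open scoped ENNReal

/-- The discriminant `∏_{i<j} (α_i β_j - α_j β_i)²` of the binary form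
`F(X,Y) = ∏ i, (α i • X - β i • Y)`. -/
noncomputable def discPair {n : ℕ} (α β : Fin n → ℂ) : ℂ :=
  ∏ i : Fin n, ∏ j ∈ Finset.Ioi i, (α i * β j - α j * β i) ^ 2

/-- The area of the region `{(x,y) ∈ ℝ² : |F(x,y)| ≤ 1}` for the binary form
`F(X,Y) = ∏ i, (α i • X - β i • Y)` with complex coefficients. -/
noncomputable def areaPair {n : ℕ} (α β : Fin n → ℂ) : ℝ≥0∞ :=
  volume {p : ℝ × ℝ | ‖∏ i, (α i * (p.1 : ℂ) - β i * (p.2 : ℂ))‖ ≤ 1}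

/-- `M n` is the supremum of `|D_F|^(1/(n(n-1))) · A_F` over all binary forms `F` of
degree `n` with complex coefficients and nonzero discriminant. -/
noncomputable def Mseq (n : ℕ) : ℝ≥0∞ :=
  ⨆ (α : Fin n → ℂ) (β : Fin n → ℂ) (_ : discPair α β ≠ 0),
    ENNReal.ofReal (‖discPair α β‖ ^ ((1 : ℝ) / ((n : ℝ) * ((n : ℝ) - 1))))
      * areaPair α β

open Real

/-! Write the form of degree `n + 1` as a product of linear factors `L_i` and, for each `k`, let
`F_k` be the form of degree `n` obtained by omitting `L_k`. In polar coordinates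
`A_F = ½ ∫_{-π}^{π} ∏ |L_i(cos θ, sin θ)|^(-2/(n+1)) dθ`, and the integrand is the geometric mean
of the integrands of the `A_{F_k}`, so Hölder's inequality gives `A_F ≤ ∏ A_{F_k}^(1/(n+1))`.
Every pair of roots survives in exactly `n - 1` of the `F_k`, so `∏ D_{F_k} = D_F^(n-1)`, and
the exponents combine to
`|D_F|^(1/(n(n+1))) A_F ≤ ∏ (|D_{F_k}|^(1/(n(n-1))) A_{F_k})^(1/(n+1)) ≤ M_n`. -/

namespace Fin

variable {M : Type*} [CommMonoid M] {n : ℕ}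

theorem prod_succAbove_eq_prod_ite (f : Fin (n + 1) → M) (k : Fin (n + 1)) :
    ∏ j, f (k.succAbove j) = ∏ i, if i = k then 1 else f i := by
  simp [prod_univ_succAbove _ k, succAbove_ne]

theorem prod_prod_succAbove (f : Fin (n + 1) → M) :
    ∏ k : Fin (n + 1), ∏ j, f (k.succAbove j) = ∏ i, f i ^ n := by
  simp_rw [prod_succAbove_eq_prod_ite f]
  rw [prod_comm]
  refine prod_congr rfl fun i _ => ?_
  simp [prod_univ_succAbove _ i, (succAbove_ne i _).symm]

theorem prod_ite_eq_or_eq_pow {a b : Fin (n + 1)} (hab : a ≠ b) (x : M) :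
    ∏ k, (if a = k ∨ b = k then 1 else x) = x ^ (n - 1) := by
  classical
  rw [prod_ite, prod_const_one, one_mul, Finset.prod_const]
  congr 1
  have : ({k | ¬(a = k ∨ b = k)} : Finset (Fin (n + 1))) = {a, b}ᶜ := by ext; simp [eq_comm]
  rw [this, card_compl, card_pair hab, Fintype.card_fin]
  omega

theorem prod_Ioi_eq_prod_ite {m : ℕ} (a : Fin m) (h : Fin m → M) :
    ∏ b ∈ Ioi a, h b = ∏ b, if a < b then h b else 1 := by
  rw [← filter_lt_eq_Ioi, prod_filter]

theorem prod_prod_Ioi_succAbove (g : Fin (n + 1) → Fin (n + 1) → M) :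
    ∏ k : Fin (n + 1), ∏ i : Fin n, ∏ j ∈ Ioi i, g (k.succAbove i) (k.succAbove j) =
      (∏ a, ∏ b ∈ Ioi a, g a b) ^ (n - 1) := by
  set G : Fin (n + 1) → Fin (n + 1) → M := fun a b => if a < b then g a b else 1
  have hk (k : Fin (n + 1)) : ∏ i : Fin n, ∏ j ∈ Ioi i, g (k.succAbove i) (k.succAbove j) =
      ∏ a, ∏ b, if a = k ∨ b = k then 1 else G a b := by
    simp_rw [prod_Ioi_eq_prod_ite, ← succAbove_lt_succAbove_iff (p := k)]
    rw [prod_succAbove_eq_prod_ite (fun a => ∏ j, G a (k.succAbove j)) k]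
    simp_rw [prod_succAbove_eq_prod_ite (G _) k]
    refine prod_congr rfl fun a _ => ?_
    split_ifs with h <;> simp [h]
  simp_rw [hk, prod_Ioi_eq_prod_ite, ← prod_pow]
  rw [prod_comm]
  refine prod_congr rfl fun a _ => ?_
  rw [prod_comm]
  refine prod_congr rfl fun b _ => ?_
  obtain rfl | hab := eq_or_ne a b
  · simp [G]
  · exact prod_ite_eq_or_eq_pow hab _

end Fin

theorem setLIntegral_Ioi_ofReal : ∫⁻ r in Set.Ioi (0 : ℝ), ENNReal.ofReal r = ∞ := by
  refine top_le_iff.1 ?_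
  calc ∞ = ∫⁻ _ in Set.Ioi (1 : ℝ), 1 := by simp
    _ ≤ ∫⁻ r in Set.Ioi (1 : ℝ), ENNReal.ofReal r :=
      setLIntegral_mono (by fun_prop) fun r hr => ENNReal.one_le_ofReal.2 (le_of_lt hr)
    _ ≤ ∫⁻ r in Set.Ioi (0 : ℝ), ENNReal.ofReal r :=
      lintegral_mono_set (Set.Ioi_subset_Ioi zero_le_one)

theorem setLIntegral_Ioc_ofReal {R : ℝ} (hR : 0 ≤ R) :
    ∫⁻ r in Set.Ioc 0 R, ENNReal.ofReal r = ENNReal.ofReal (R ^ 2 / 2) := by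
  rw [← ofReal_integral_eq_lintegral_ofReal (f := fun r => r) continuous_id.integrableOn_Ioc
    (ae_restrict_of_forall_mem (measurableSet_Ioc (a := 0) (b := R)) fun r hr => hr.1.le),
    ← intervalIntegral.integral_of_le hR, integral_id]
  norm_num

theorem lintegral_ofReal_setOf_pow_mul_le_one {m : ℕ} (hm : m ≠ 0) {c : ℝ} (hc : 0 ≤ c) :
    ∫⁻ r in {r : ℝ | 0 < r ∧ r ^ m * c ≤ 1}, ENNReal.ofReal r =
      ENNReal.ofReal c ^ (-2 / m : ℝ) / 2 := by
  have hm' : (0 : ℝ) < m := by positivity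
  rcases hc.eq_or_lt with rfl | hc
  · rw [ENNReal.ofReal_zero, ENNReal.zero_rpow_of_neg (div_neg_of_neg_of_pos (by norm_num) hm'),
      ENNReal.top_div_of_ne_top ENNReal.ofNat_ne_top]
    simpa [Set.Ioi_def] using setLIntegral_Ioi_ofReal
  · set R := c⁻¹ ^ (m : ℝ)⁻¹
    have hset : {r : ℝ | 0 < r ∧ r ^ m * c ≤ 1} = Set.Ioc 0 R := by
      ext r
      refine and_congr_right fun hr => ?_
      rw [← le_div_iff₀ hc, one_div, le_rpow_inv_iff_of_pos hr.le (by positivity) hm',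
        rpow_natCast]
    have hR : R ^ 2 = c ^ (-2 / m : ℝ) := by
      rw [← rpow_natCast, ← rpow_mul (by positivity), inv_rpow hc.le, ← rpow_neg hc.le]
      congr 1
      push_cast
      ring
    rw [hset, setLIntegral_Ioc_ofReal (by positivity), hR, ENNReal.ofReal_div_of_pos two_pos,
      ENNReal.ofReal_rpow_of_pos hc, ENNReal.ofReal_ofNat]

theorem volume_setOf_le_one_of_homogeneous {f : ℝ × ℝ → ℝ} (hf : Measurable f)
    (hf0 : ∀ p, 0 ≤ f p) {m : ℕ} (hm : m ≠ 0)
    (hhom : ∀ r : ℝ, 0 < r → ∀ p, f (r • p) = r ^ m * f p) :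
    volume {p | f p ≤ 1} =
      (∫⁻ θ in Set.Ioo (-π) π, ENNReal.ofReal (f (cos θ, sin θ)) ^ (-2 / m : ℝ)) / 2 := by
  set S := {p | f p ≤ 1}
  have hS : MeasurableSet S := measurableSet_le hf measurable_const
  have hradial (θ : ℝ) :
      ∫⁻ r in Set.Ioi 0, ENNReal.ofReal r • S.indicator 1 (polarCoord.symm (r, θ)) =
        ENNReal.ofReal (f (cos θ, sin θ)) ^ (-2 / m : ℝ) / 2 := by
    set c := f (cos θ, sin θ)
    have hmeas : MeasurableSet {r : ℝ | r ^ m * c ≤ 1} :=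
      measurableSet_le (by fun_prop) measurable_const
    calc ∫⁻ r in Set.Ioi 0, ENNReal.ofReal r • S.indicator 1 (polarCoord.symm (r, θ))
        = ∫⁻ r in Set.Ioi 0, {r : ℝ | r ^ m * c ≤ 1}.indicator ENNReal.ofReal r := by
          refine setLIntegral_congr_fun measurableSet_Ioi fun r hr => ?_
          have : polarCoord.symm (r, θ) = r • (cos θ, sin θ) := by
            simp [polarCoord]
          simp only [this, S, Set.indicator, Set.mem_ofPred_eq, hhom r hr]
          split_ifs <;> simp
      _ = ∫⁻ r in {r : ℝ | 0 < r ∧ r ^ m * c ≤ 1}, ENNReal.ofReal r := by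
          rw [lintegral_indicator hmeas, Measure.restrict_restrict hmeas, Set.inter_comm]
          rfl
      _ = _ := lintegral_ofReal_setOf_pow_mul_le_one hm (hf0 _)
  have hmeas : Measurable fun p : ℝ × ℝ =>
      ENNReal.ofReal p.1 • S.indicator (1 : ℝ × ℝ → ℝ≥0∞) (polarCoord.symm p) :=
    measurable_fst.ennreal_ofReal.smul
      ((measurable_one.indicator hS).comp continuous_polarCoord_symm.measurable)
  rw [← lintegral_indicator_one hS, ← lintegral_comp_polarCoord_symm,
    show polarCoord.target = Set.Ioi 0 ×ˢ Set.Ioo (-π) π from rfl, Measure.volume_eq_prod,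
    ← Measure.prod_restrict, lintegral_prod_symm _ hmeas.aemeasurable]
  simp_rw [hradial, div_eq_mul_inv]
  exact lintegral_mul_const' _ _ (by norm_num)

-- The factor `1/2` of the polar formula is put into the measure so that Hölder applies verbatim.
theorem areaPair_eq_lintegral {m : ℕ} (hm : m ≠ 0) (α β : Fin m → ℂ) :
    areaPair α β = ∫⁻ θ, ∏ i, ENNReal.ofReal ‖α i * cos θ - β i * sin θ‖ ^ (-2 / m : ℝ)
      ∂((2 : ℝ≥0∞)⁻¹ • volume.restrict (Set.Ioo (-π) π)) := by
  have hhom (r : ℝ) (hr : 0 < r) (p : ℝ × ℝ) :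
      ‖∏ i, (α i * ((r • p).1 : ℂ) - β i * ((r • p).2 : ℂ))‖ =
        r ^ m * ‖∏ i, (α i * (p.1 : ℂ) - β i * (p.2 : ℂ))‖ := by
    have (i : Fin m) : α i * ((r • p).1 : ℂ) - β i * ((r • p).2 : ℂ) =
        r * (α i * (p.1 : ℂ) - β i * (p.2 : ℂ)) := by
      simp only [Prod.smul_fst, Prod.smul_snd, smul_eq_mul, Complex.ofReal_mul]
      ring
    simp_rw [this, prod_mul_distrib, prod_const, card_univ, Fintype.card_fin, norm_mul, norm_pow,
      Complex.norm_real, Real.norm_of_nonneg hr.le]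
  rw [areaPair, volume_setOf_le_one_of_homogeneous (by fun_prop) (fun _ => norm_nonneg _) hm hhom,
    lintegral_smul_measure, smul_eq_mul, mul_comm, ← div_eq_mul_inv]
  congr 1
  refine lintegral_congr fun θ => ?_
  simp only [norm_prod]
  rw [ENNReal.ofReal_prod_of_nonneg fun i _ => norm_nonneg _,
    ENNReal.prod_rpow_of_ne_top fun i _ => ENNReal.ofReal_ne_top]

theorem lintegral_prod_rpow_le_prod_succAbove {X : Type*} [MeasurableSpace X] {μ : Measure X}
    {n : ℕ} {f : Fin (n + 1) → X → ℝ≥0∞} (hf : ∀ i, AEMeasurable (f i) μ) :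
    ∫⁻ x, ∏ i, f i x ^ ((n : ℝ) / (n + 1)) ∂μ ≤
      ∏ k : Fin (n + 1), (∫⁻ x, ∏ j, f (k.succAbove j) x ∂μ) ^ ((n : ℝ) + 1)⁻¹ := by
  have hpoint (x : X) :
      ∏ i, f i x ^ ((n : ℝ) / (n + 1)) =
        ∏ k : Fin (n + 1), (∏ j, f (k.succAbove j) x) ^ ((n : ℝ) + 1)⁻¹ := by
    simp_rw [← ENNReal.prod_rpow_of_nonneg (by positivity : (0 : ℝ) ≤ ((n : ℝ) + 1)⁻¹),
      Fin.prod_prod_succAbove (fun i => f i x ^ ((n : ℝ) + 1)⁻¹), ← ENNReal.rpow_natCast,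
      ← ENNReal.rpow_mul, div_eq_inv_mul]
  simp_rw [hpoint]
  refine ENNReal.lintegral_prod_norm_pow_le _
    (fun k _ => Finset.aemeasurable_fun_prod _ fun j _ => hf _) ?_ fun _ _ => by positivity
  simp only [sum_const, card_univ, Fintype.card_fin, nsmul_eq_mul]
  push_cast
  field_simp

theorem areaPair_le_prod_areaPair_succAbove {n : ℕ} (hn : n ≠ 0) (α β : Fin (n + 1) → ℂ) :
    areaPair α β ≤
      ∏ k : Fin (n + 1), areaPair (α ∘ k.succAbove) (β ∘ k.succAbove) ^ ((n : ℝ) + 1)⁻¹ := by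
  set f : Fin (n + 1) → ℝ → ℝ≥0∞ :=
    fun i θ => ENNReal.ofReal ‖α i * cos θ - β i * sin θ‖ ^ (-2 / n : ℝ)
  have hexp (i : Fin (n + 1)) (θ : ℝ) :
      ENNReal.ofReal ‖α i * cos θ - β i * sin θ‖ ^ (-2 / (n + 1 : ℕ) : ℝ) =
        f i θ ^ ((n : ℝ) / (n + 1)) := by
    rw [← ENNReal.rpow_mul]
    congr 1
    push_cast
    field_simp
  rw [areaPair_eq_lintegral n.succ_ne_zero]
  simp_rw [areaPair_eq_lintegral hn, hexp]
  exact lintegral_prod_rpow_le_prod_succAbove fun i => by fun_prop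

theorem prod_discPair_succAbove {n : ℕ} (α β : Fin (n + 1) → ℂ) :
    ∏ k : Fin (n + 1), discPair (α ∘ k.succAbove) (β ∘ k.succAbove) = discPair α β ^ (n - 1) :=
  Fin.prod_prod_Ioi_succAbove fun a b => (α a * β b - α b * β a) ^ 2

theorem discPair_succAbove_ne_zero {n : ℕ} {α β : Fin (n + 1) → ℂ} (h : discPair α β ≠ 0)
    (k : Fin (n + 1)) : discPair (α ∘ k.succAbove) (β ∘ k.succAbove) ≠ 0 := by
  have : ∏ k : Fin (n + 1), discPair (α ∘ k.succAbove) (β ∘ k.succAbove) ≠ 0 := by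
    rw [prod_discPair_succAbove]
    exact pow_ne_zero _ h
  exact prod_ne_zero_iff.1 this k (mem_univ k)

noncomputable def discRoot {n : ℕ} (α β : Fin n → ℂ) : ℝ≥0∞ :=
  ENNReal.ofReal (‖discPair α β‖ ^ ((1 : ℝ) / ((n : ℝ) * ((n : ℝ) - 1))))

theorem discRoot_eq_prod_succAbove {n : ℕ} (hn : 2 ≤ n) (α β : Fin (n + 1) → ℂ) :
    discRoot α β =
      ∏ k : Fin (n + 1), discRoot (α ∘ k.succAbove) (β ∘ k.succAbove) ^ ((n : ℝ) + 1)⁻¹ := by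
  have hn' : (1 : ℝ) < n := by exact_mod_cast hn
  set e : ℝ := (1 : ℝ) / ((n : ℝ) * ((n : ℝ) - 1))
  set t : ℝ := ((n : ℝ) + 1)⁻¹
  have ht : 0 ≤ t := by positivity
  symm
  calc ∏ k : Fin (n + 1), discRoot (α ∘ k.succAbove) (β ∘ k.succAbove) ^ t
      = ENNReal.ofReal (∏ k : Fin (n + 1),
          (‖discPair (α ∘ k.succAbove) (β ∘ k.succAbove)‖ ^ e) ^ t) := by
        rw [ENNReal.ofReal_prod_of_nonneg fun k _ => by positivity]
        exact prod_congr rfl fun k _ =>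
          ENNReal.ofReal_rpow_of_nonneg (by positivity) ht
    _ = ENNReal.ofReal ((‖discPair α β‖ ^ (n - 1)) ^ (e * t)) := by
        simp_rw [← Real.rpow_mul (norm_nonneg _)]
        rw [Real.finsetProd_rpow _ _ fun k _ => norm_nonneg _, ← norm_prod,
          prod_discPair_succAbove, norm_pow]
    _ = discRoot α β := by
        rw [← Real.rpow_natCast, ← Real.rpow_mul (norm_nonneg _), discRoot]
        congr 2
        have h₀ : (n : ℝ) ≠ 0 := by positivity
        have h₁ : (n : ℝ) - 1 ≠ 0 := by linarith
        rw [Nat.cast_sub (by omega : 1 ≤ n)]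
        unfold e t
        push_cast
        rw [add_sub_cancel_right]
        field_simp

noncomputable def normalizedArea {n : ℕ} (α β : Fin n → ℂ) : ℝ≥0∞ :=
  discRoot α β * areaPair α β

theorem normalizedArea_le_prod_succAbove {n : ℕ} (hn : 2 ≤ n) (α β : Fin (n + 1) → ℂ) :
    normalizedArea α β ≤
      ∏ k : Fin (n + 1), normalizedArea (α ∘ k.succAbove) (β ∘ k.succAbove) ^ ((n : ℝ) + 1)⁻¹ := by
  have ht : (0 : ℝ) ≤ ((n : ℝ) + 1)⁻¹ := by positivity
  simp_rw [normalizedArea, ENNReal.mul_rpow_of_nonneg _ _ ht, prod_mul_distrib,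
    ← discRoot_eq_prod_succAbove hn]
  gcongr
  exact areaPair_le_prod_areaPair_succAbove (by omega) α β

theorem normalizedArea_le_Mseq {n : ℕ} {α β : Fin n → ℂ} (h : discPair α β ≠ 0) :
    normalizedArea α β ≤ Mseq n :=
  le_iSup₂_of_le α β (le_iSup_of_le h le_rfl)

theorem ENNReal.prod_rpow_inv_card (n : ℕ) (x : ℝ≥0∞) :
    ∏ _k : Fin (n + 1), x ^ ((n : ℝ) + 1)⁻¹ = x := by
  rw [Finset.prod_const, card_univ, Fintype.card_fin, ← ENNReal.rpow_natCast, ← ENNReal.rpow_mul]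
  push_cast
  rw [inv_mul_cancel₀ (by positivity), ENNReal.rpow_one]

/-- The sequence `{M_n}` is decreasing: `M_{n+1} ≤ M_n` for all `n ≥ 3`. -/
theorem Mseq_decreasing (n : ℕ) (hn : 3 ≤ n) : Mseq (n + 1) ≤ Mseq n := by
  refine iSup₂_le fun α β => iSup_le fun hD => ?_
  calc normalizedArea α β
      ≤ ∏ k : Fin (n + 1),
          normalizedArea (α ∘ k.succAbove) (β ∘ k.succAbove) ^ ((n : ℝ) + 1)⁻¹ :=
        normalizedArea_le_prod_succAbove (by omega) α β
    _ ≤ ∏ _k : Fin (n + 1), Mseq n ^ ((n : ℝ) + 1)⁻¹ := by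
        gcongr with k
        exact normalizedArea_le_Mseq (discPair_succAbove_ne_zero hD k)
    _ = Mseq n := ENNReal.prod_rpow_inv_card n _
end

section
/- Let k ≥ 2 and let P_k(X,Y) = X^{2k} + (X−Y)²(2X−Y)²···(kX−Y)². Then the area of the region {(x,y) ∈ ℝ² : |P_k(x,y)| ≤ 1} is less than 16. -/
open MeasureTheory Finset
open scoped ENNReal

/-- The binary form `P_k(X,Y) = X^(2k) + ∏_{j=1}^{k} (jX - Y)²`. -/
noncomputable def Pform (k : ℕ) (x y : ℝ) : ℝ :=
  x ^ (2 * k) + ∏ j ∈ Finset.Icc 1 k, ((j : ℝ) * x - y) ^ 2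

/-!
On the region, `|x| ≤ 1` and `∏ |j x - y| ≤ 1`. Fix `t`. If `|x| ≤ t`, some factor is at
most `1`, so `y` lies within `1` of the segment from `x` to `k x`: a slice of length
`(k - 1)|x| + 2`. If `|x| > t`, the nodes `j x` are `|x|`-separated, so the factor nearest to `y`
is at most `2^(k-1) / (F t^(k-1))`, where `F = ⌊(k-1)/2⌋! ⌈(k-1)/2⌉!` is the least value of
`∏_{j ≠ i} |j - i|`; the slice then lies in `k` intervals of some radius `R`. Integrating over
`x`, the area is at most `(k - 1) t² + 4 t + 4 k R`. Taking `t = 1` settles `k ≤ 12`,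
`t = 9/10` settles `k = 13`, and `t = 12/(k-1)`, `R = 1/(8k)` settles `k ≥ 14`, thanks to
`F ≥ 8k ((k-1)/6)^(k-1)`, which follows by induction from `(1 + 1/n)^n < e`.
-/

open Nat

def balancedFactorialProd (n : ℕ) : ℕ := (n / 2)! * (n - n / 2)!

lemma balancedFactorialProd_pos (n : ℕ) : 0 < balancedFactorialProd n :=
  Nat.mul_pos (factorial_pos _) (factorial_pos _)

lemma balancedFactorialProd_le_factorial_mul_factorial {n i : ℕ} (h : i ≤ n) :
    balancedFactorialProd n ≤ i ! * (n - i)! := by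
  have hmid : n / 2 ≤ n := Nat.div_le_self n 2
  refine Nat.le_of_mul_le_mul_left ?_ (choose_pos hmid)
  calc n.choose (n / 2) * balancedFactorialProd n = n ! := by
        rw [balancedFactorialProd, ← mul_assoc, choose_mul_factorial_mul_factorial hmid]
    _ = n.choose i * (i ! * (n - i)!) := by rw [← mul_assoc, choose_mul_factorial_mul_factorial h]
    _ ≤ n.choose (n / 2) * (i ! * (n - i)!) := Nat.mul_le_mul_right _ (choose_le_middle i n)

lemma balancedFactorialProd_succ (n : ℕ) :
    balancedFactorialProd (n + 1) = (n + 2) / 2 * balancedFactorialProd n := by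
  obtain ⟨m, rfl | rfl⟩ := n.even_or_odd'
  · rw [balancedFactorialProd, balancedFactorialProd, show (2 * m + 1) / 2 = m by omega,
      show 2 * m + 1 - m = m + 1 by omega, show 2 * m / 2 = m by omega,
      show 2 * m - m = m by omega, show (2 * m + 2) / 2 = m + 1 by omega, factorial_succ]
    ring
  · rw [balancedFactorialProd, balancedFactorialProd, show (2 * m + 1 + 1) / 2 = m + 1 by omega,
      show 2 * m + 1 + 1 - (m + 1) = m + 1 by omega, show (2 * m + 1) / 2 = m by omega,
      show 2 * m + 1 - m = m + 1 by omega, show (2 * m + 1 + 2) / 2 = m + 1 by omega,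
      factorial_succ m]
    ring

lemma one_add_inv_pow_le_exp_one (n : ℕ) : (1 + (n : ℝ)⁻¹) ^ n ≤ Real.exp 1 := by
  rcases n.eq_zero_or_pos with rfl | hn
  · simp
  calc (1 + (n : ℝ)⁻¹) ^ n ≤ Real.exp (n : ℝ)⁻¹ ^ n := by
        gcongr
        linarith [Real.add_one_le_exp (n : ℝ)⁻¹]
    _ = Real.exp 1 := by
        rw [← Real.exp_nat_mul, mul_inv_cancel₀ (by positivity)]

lemma le_balancedFactorialProd {n : ℕ} (hn : 13 ≤ n) :
    8 * ((n : ℝ) + 1) * ((n : ℝ) / 6) ^ n ≤ balancedFactorialProd n := by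
  induction n, hn using Nat.le_induction with
  | base => norm_num [balancedFactorialProd, factorial]
  | succ n hn ih =>
    have hn' : (13 : ℝ) ≤ n := by exact_mod_cast hn
    have he : (1 + (n : ℝ)⁻¹) ^ n ≤ 2.7182818286 :=
      (one_add_inv_pow_le_exp_one n).trans Real.exp_one_lt_d9.le
    have hhalf : ((n : ℝ) + 1) / 2 ≤ ((n + 2) / 2 : ℕ) := by
      have : n + 1 ≤ 2 * ((n + 2) / 2) := by omega
      have : ((n : ℝ) + 1) ≤ 2 * ((n + 2) / 2 : ℕ) := by exact_mod_cast this
      linarith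
    have hpow : (((n : ℝ) + 1) / 6) ^ n = ((n : ℝ) / 6) ^ n * (1 + (n : ℝ)⁻¹) ^ n := by
      rw [← mul_pow]; congr 1; field_simp
    rw [balancedFactorialProd_succ, Nat.cast_mul]
    push_cast
    calc 8 * ((n : ℝ) + 1 + 1) * (((n : ℝ) + 1) / 6) ^ (n + 1)
        = 8 * (n + 2) * ((n + 1) / 6) * (((n : ℝ) / 6) ^ n * (1 + (n : ℝ)⁻¹) ^ n) := by
          rw [pow_succ, hpow]; ring
      _ ≤ 8 * (n + 2) * ((n + 1) / 6) * (((n : ℝ) / 6) ^ n * 2.7182818286) := by gcongr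
      _ = 2.7182818286 * (n + 2) / 6 * (8 * ((n : ℝ) + 1) * ((n : ℝ) / 6) ^ n) := by ring
      _ ≤ ((n + 2) / 2 : ℕ) * balancedFactorialProd n := by
          gcongr
          linarith

lemma exists_abs_sub_mul_prod_erase_le {ι : Type*} [DecidableEq ι] {s : Finset ι}
    (hs : s.Nonempty) (a : ι → ℝ) (y : ℝ) :
    ∃ i ∈ s, |a i - y| * ∏ j ∈ s.erase i, |a j - a i|
      ≤ 2 ^ (#s - 1) * ∏ j ∈ s, |a j - y| := by
  obtain ⟨i, hi, hmin⟩ := s.exists_min_image (fun j => |a j - y|) hs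
  refine ⟨i, hi, ?_⟩
  have hnear : ∀ j ∈ s.erase i, |a j - a i| ≤ 2 * |a j - y| := fun j hj =>
    calc |a j - a i| ≤ |a j - y| + |y - a i| := abs_sub_le _ _ _
      _ ≤ 2 * |a j - y| := by rw [abs_sub_comm y]; linarith [hmin j (mem_of_mem_erase hj)]
  calc |a i - y| * ∏ j ∈ s.erase i, |a j - a i|
      ≤ |a i - y| * ∏ j ∈ s.erase i, (2 * |a j - y|) := by
        gcongr with j hj
        exact hnear j hj
    _ = 2 ^ (#s - 1) * ∏ j ∈ s, |a j - y| := by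
        rw [prod_mul_distrib, prod_const, card_erase_of_mem hi, ← mul_prod_erase s _ hi]
        ring

lemma prod_erase_abs_natCast_sub {n i : ℕ} (hi : i ∈ Icc 1 (n + 1)) :
    ∏ j ∈ (Icc 1 (n + 1)).erase i, |(j : ℝ) - i| = ((i - 1)! * (n + 1 - i)! : ℕ) := by
  rw [mem_Icc] at hi
  have hsplit : (Icc 1 (n + 1)).erase i = Ico 1 i ∪ Ico (i + 1) (n + 2) := by
    ext j; simp only [mem_erase, mem_Icc, mem_union, mem_Ico]; omega
  rw [hsplit, prod_union (disjoint_left.2 fun j h h' => by simp only [mem_Ico] at h h'; omega),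
    prod_Ico_eq_prod_range, prod_Ico_eq_prod_range, Nat.cast_mul,
    ← descFactorial_self, descFactorial_eq_prod_range, ← prod_range_add_one_eq_factorial]
  push_cast
  congr 1
  · refine prod_congr rfl fun l hl => ?_
    rw [mem_range] at hl
    rw [abs_sub_comm, Nat.cast_sub (by omega), Nat.cast_sub hi.1,
      abs_of_nonneg (by rw [sub_nonneg]; exact_mod_cast (by omega : 1 + l ≤ i))]
    ring
  · refine prod_congr rfl fun l _ => ?_
    rw [abs_of_nonneg (by linarith)]
    ring

def pformRegion (k : ℕ) : Set (ℝ × ℝ) := {p | |Pform k p.1 p.2| ≤ 1}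

lemma isClosed_pformRegion (k : ℕ) : IsClosed (pformRegion k) :=
  isClosed_le (by unfold Pform; fun_prop) continuous_const

lemma abs_le_one_and_prod_le_one_of_mem_pformRegion {n : ℕ} {x y : ℝ}
    (h : (x, y) ∈ pformRegion (n + 1)) :
    |x| ≤ 1 ∧ ∏ j ∈ Icc 1 (n + 1), |(j : ℝ) * x - y| ≤ 1 := by
  set Q := ∏ j ∈ Icc 1 (n + 1), |(j : ℝ) * x - y|
  have hP : Pform (n + 1) x y = |x| ^ (2 * (n + 1)) + Q ^ 2 := by
    simp only [Pform, Q, (even_two_mul _).pow_abs, ← prod_pow, sq_abs]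
  have hQ : 0 ≤ Q := prod_nonneg fun _ _ => abs_nonneg _
  have hx : 0 ≤ |x| ^ (2 * (n + 1)) := by positivity
  have h' : |x| ^ (2 * (n + 1)) + Q ^ 2 ≤ 1 := by
    rw [← hP]; exact (le_abs_self _).trans h
  exact ⟨(pow_le_one_iff_of_nonneg (abs_nonneg x) (by omega : 2 * (n + 1) ≠ 0)).1
      (by nlinarith), (pow_le_one_iff_of_nonneg hQ two_ne_zero).1 (by nlinarith)⟩

lemma exists_abs_natCast_mul_sub_mul_le (n : ℕ) (x y : ℝ) :
    ∃ j ∈ Icc 1 (n + 1), |(j : ℝ) * x - y| * (balancedFactorialProd n * |x| ^ n)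
      ≤ 2 ^ n * ∏ j ∈ Icc 1 (n + 1), |(j : ℝ) * x - y| := by
  obtain ⟨i, hi, h⟩ := exists_abs_sub_mul_prod_erase_le (s := Icc 1 (n + 1))
    ⟨1, by simp⟩ (fun j => (j : ℝ) * x) y
  refine ⟨i, hi, le_trans ?_ (by simpa using h)⟩
  have hdist : ∏ j ∈ (Icc 1 (n + 1)).erase i, |(j : ℝ) * x - i * x|
      = ((i - 1)! * (n + 1 - i)! : ℕ) * |x| ^ n := by
    simp_rw [← sub_mul, abs_mul]
    rw [prod_mul_distrib, prod_erase_abs_natCast_sub hi, prod_const, card_erase_of_mem hi]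
    simp
  have hF : balancedFactorialProd n ≤ (i - 1)! * (n + 1 - i)! := by
    rw [mem_Icc] at hi
    simpa [show n - (i - 1) = n + 1 - i by omega] using
      balancedFactorialProd_le_factorial_mul_factorial (show i - 1 ≤ n by omega)
  rw [hdist]
  gcongr

lemma prod_le_ofReal_setIntegral_of_slice_le {α β : Type*} [MeasurableSpace α]
    [MeasurableSpace β] {μ : Measure α} {ν : Measure β} {S : Set (α × β)}
    (hS : MeasurableSet S) {s : Set α} (hs : MeasurableSet s) (hSs : ∀ p ∈ S, p.1 ∈ s)
    {h : α → ℝ} (hint : IntegrableOn h s μ) (hpos : ∀ x ∈ s, 0 ≤ h x)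
    (hslice : ∀ x ∈ s, ν (Prod.mk x ⁻¹' S) ≤ ENNReal.ofReal (h x)) :
    μ.prod ν S ≤ ENNReal.ofReal (∫ x in s, h x ∂μ) := by
  have hsupp : (fun x => ν (Prod.mk x ⁻¹' S)).support ⊆ s := fun x hx => by
    by_contra hxs
    have hempty : Prod.mk x ⁻¹' S = ∅ :=
      Set.eq_empty_of_forall_notMem fun y hy => hxs (hSs (x, y) hy)
    exact hx (by simp only [hempty, measure_empty])
  rw [ofReal_integral_eq_lintegral_ofReal hint ((ae_restrict_iff' hs).2 (.of_forall hpos))]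
  calc μ.prod ν S ≤ ∫⁻ x, ν (Prod.mk x ⁻¹' S) ∂μ := Measure.prod_apply_le hS
    _ = ∫⁻ x in s, ν (Prod.mk x ⁻¹' S) ∂μ :=
        (setLIntegral_eq_of_support_subset hsupp).symm
    _ ≤ ∫⁻ x in s, ENNReal.ofReal (h x) ∂μ := setLIntegral_mono' hs hslice

lemma intervalIntegral_abs_symm {t : ℝ} (ht : 0 ≤ t) : ∫ x in -t..t, |x| = t ^ 2 := by
  have hright : ∫ x in (0 : ℝ)..t, |x| = t ^ 2 / 2 := by
    rw [intervalIntegral.integral_congr (g := fun x => x) fun x hx => abs_of_nonneg (by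
      rw [Set.uIcc_of_le ht] at hx; exact hx.1)]
    simp
  have hleft : ∫ x in -t..0, |x| = t ^ 2 / 2 := by
    simpa [hright] using
      (intervalIntegral.integral_comp_neg (a := 0) (b := t) (fun x : ℝ => |x|)).symm
  rw [← intervalIntegral.integral_add_adjacent_intervals (b := 0)
    (continuous_abs.intervalIntegrable _ _) (continuous_abs.intervalIntegrable _ _), hleft, hright]
  ring

lemma mem_Icc_min_max_of_prod_abs_le_one {n : ℕ} {x y : ℝ}
    (h : ∏ j ∈ Icc 1 (n + 1), |(j : ℝ) * x - y| ≤ 1) :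
    y ∈ Set.Icc (min x ((n + 1) * x) - 1) (max x ((n + 1) * x) + 1) := by
  obtain ⟨j, hj, hjy⟩ : ∃ j ∈ Icc 1 (n + 1), |(j : ℝ) * x - y| ≤ 1 := by
    by_contra! hbig
    have := prod_lt_prod_of_nonempty (fun _ _ => one_pos) hbig ⟨1, by simp⟩
    rw [prod_const_one] at this
    linarith
  rw [mem_Icc] at hj
  have hj1 : (1 : ℝ) ≤ j := by exact_mod_cast hj.1
  have hjn : (j : ℝ) ≤ n + 1 := by exact_mod_cast hj.2
  have hmin : min x ((n + 1) * x) ≤ j * x := by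
    rcases le_total 0 x with hx | hx
    · exact min_le_of_left_le (by nlinarith)
    · exact min_le_of_right_le (by nlinarith)
  have hmax : j * x ≤ max x ((n + 1) * x) := by
    rcases le_total 0 x with hx | hx
    · exact le_max_of_le_right (by nlinarith)
    · exact le_max_of_le_left (by nlinarith)
  rw [abs_le] at hjy
  constructor <;> linarith

lemma volume_pformRegion_inter_abs_fst_le (n : ℕ) {t : ℝ} (ht : 0 ≤ t) :
    volume (pformRegion (n + 1) ∩ {p | |p.1| ≤ t})
      ≤ ENNReal.ofReal (n * t ^ 2 + 4 * t) := by
  have hS : MeasurableSet (pformRegion (n + 1) ∩ {p | |p.1| ≤ t}) :=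
    (isClosed_pformRegion _).measurableSet.inter
      (isClosed_le (by fun_prop) continuous_const).measurableSet
  have hslice : ∀ x ∈ Set.Icc (-t) t,
      volume (Prod.mk x ⁻¹' (pformRegion (n + 1) ∩ {p | |p.1| ≤ t}))
        ≤ ENNReal.ofReal (n * |x| + 2) := fun x _ => by
    calc _ ≤ volume (Set.Icc (min x ((n + 1) * x) - 1) (max x ((n + 1) * x) + 1)) :=
          measure_mono fun y hy => mem_Icc_min_max_of_prod_abs_le_one
            (abs_le_one_and_prod_le_one_of_mem_pformRegion hy.1).2
      _ = ENNReal.ofReal (n * |x| + 2) := by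
          rw [Real.volume_Icc, show ∀ a b : ℝ, b + 1 - (a - 1) = (b - a) + 2 by intros; ring,
            max_sub_min_eq_abs, show (n + 1) * x - x = n * x by ring, abs_mul,
            Nat.abs_cast]
  rw [Measure.volume_eq_prod]
  refine (prod_le_ofReal_setIntegral_of_slice_le hS measurableSet_Icc
    (fun p hp => abs_le.1 hp.2) (Continuous.integrableOn_Icc (by fun_prop))
    (fun x _ => by positivity) hslice).trans_eq ?_
  rw [integral_Icc_eq_integral_Ioc, ← intervalIntegral.integral_of_le (by linarith),
    intervalIntegral.integral_add ((continuous_abs.intervalIntegrable _ _).const_mul _)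
      intervalIntegrable_const, intervalIntegral.integral_const_mul,
    intervalIntegral_abs_symm ht, intervalIntegral.integral_const, smul_eq_mul]
  ring_nf

lemma exists_abs_natCast_mul_sub_le_of_mem_pformRegion {n : ℕ} {t R x y : ℝ} (ht : 0 < t)
    (hR0 : 0 ≤ R) (hR : 2 ^ n ≤ R * balancedFactorialProd n * t ^ n) (h : (x, y) ∈ pformRegion (n + 1))
    (hx : t < |x|) : ∃ j ∈ Icc 1 (n + 1), |(j : ℝ) * x - y| ≤ R := by
  have hF : (0 : ℝ) < balancedFactorialProd n := by exact_mod_cast balancedFactorialProd_pos n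
  obtain ⟨j, hj, hjy⟩ := exists_abs_natCast_mul_sub_mul_le n x y
  refine ⟨j, hj, le_of_mul_le_mul_right ?_ (mul_pos hF (pow_pos (ht.trans hx) n))⟩
  calc |(j : ℝ) * x - y| * (balancedFactorialProd n * |x| ^ n)
      ≤ 2 ^ n * ∏ j ∈ Icc 1 (n + 1), |(j : ℝ) * x - y| := hjy
    _ ≤ R * balancedFactorialProd n * t ^ n :=
        (mul_le_of_le_one_right (by positivity)
          (abs_le_one_and_prod_le_one_of_mem_pformRegion h).2).trans hR
    _ ≤ R * (balancedFactorialProd n * |x| ^ n) := by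
        rw [mul_assoc]; gcongr

lemma volume_pformRegion_inter_lt_abs_fst (n : ℕ) {t R : ℝ} (ht : 0 < t) (hR0 : 0 ≤ R)
    (hR : 2 ^ n ≤ R * balancedFactorialProd n * t ^ n) :
    volume (pformRegion (n + 1) ∩ {p | t < |p.1|})
      ≤ ENNReal.ofReal (4 * (n + 1) * R) := by
  have hS : MeasurableSet (pformRegion (n + 1) ∩ {p | t < |p.1|}) :=
    (isClosed_pformRegion _).measurableSet.inter
      (measurableSet_lt measurable_const (by fun_prop))
  have hslice : ∀ x ∈ Set.Icc (-1 : ℝ) 1,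
      volume (Prod.mk x ⁻¹' (pformRegion (n + 1) ∩ {p | t < |p.1|}))
        ≤ ENNReal.ofReal (2 * (n + 1) * R) := fun x _ => by
    calc _ ≤ volume (⋃ j ∈ Icc 1 (n + 1), Set.Icc ((j : ℝ) * x - R) (j * x + R)) :=
          measure_mono fun y hy => by
            obtain ⟨j, hj, hjy⟩ :=
              exists_abs_natCast_mul_sub_le_of_mem_pformRegion ht hR0 hR hy.1 hy.2
            exact Set.mem_biUnion hj (by rw [abs_le] at hjy; constructor <;> linarith)
      _ ≤ ∑ j ∈ Icc 1 (n + 1), volume (Set.Icc ((j : ℝ) * x - R) (j * x + R)) :=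
          measure_biUnion_finset_le _ _
      _ = ENNReal.ofReal (2 * (n + 1) * R) := by
          simp only [Real.volume_Icc, show ∀ a : ℝ, a + R - (a - R) = 2 * R by intros; ring,
            sum_const, Nat.card_Icc, add_tsub_cancel_right, nsmul_eq_mul]
          rw [← ENNReal.ofReal_natCast, ← ENNReal.ofReal_mul (by positivity)]
          congr 1
          push_cast
          ring
  rw [Measure.volume_eq_prod]
  refine (prod_le_ofReal_setIntegral_of_slice_le hS measurableSet_Icc
    (fun p hp => abs_le.1 (abs_le_one_and_prod_le_one_of_mem_pformRegion hp.1).1)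
    (integrableOn_const (by simp)) (fun x _ => by positivity) hslice).trans_eq ?_
  rw [setIntegral_const, Real.volume_real_Icc_of_le (by norm_num), smul_eq_mul]
  ring_nf

lemma volume_pformRegion_le (n : ℕ) {t R : ℝ} (ht : 0 < t) (hR0 : 0 ≤ R)
    (hR : 2 ^ n ≤ R * balancedFactorialProd n * t ^ n) :
    volume (pformRegion (n + 1))
      ≤ ENNReal.ofReal (n * t ^ 2 + 4 * t + 4 * (n + 1) * R) := by
  have hsplit : pformRegion (n + 1)
      ⊆ (pformRegion (n + 1) ∩ {p | |p.1| ≤ t})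
        ∪ (pformRegion (n + 1) ∩ {p | t < |p.1|}) := fun p hp =>
    (le_or_gt |p.1| t).imp (⟨hp, ·⟩) (⟨hp, ·⟩)
  calc _ ≤ _ := measure_mono hsplit
    _ ≤ _ := measure_union_le _ _
    _ ≤ ENNReal.ofReal (n * t ^ 2 + 4 * t) + ENNReal.ofReal (4 * (n + 1) * R) :=
        add_le_add (volume_pformRegion_inter_abs_fst_le n ht.le)
          (volume_pformRegion_inter_lt_abs_fst n ht hR0 hR)
    _ = _ := (ENNReal.ofReal_add (by positivity) (by positivity)).symm

lemma volume_pformRegion_le_add_four (n : ℕ) :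
    volume (pformRegion (n + 1)) ≤ ENNReal.ofReal (n + 4) := by
  have hsub : pformRegion (n + 1)
      ⊆ pformRegion (n + 1) ∩ {p | |p.1| ≤ 1} := fun p hp =>
    ⟨hp, (abs_le_one_and_prod_le_one_of_mem_pformRegion hp).1⟩
  simpa using (measure_mono hsub).trans (volume_pformRegion_inter_abs_fst_le n zero_le_one)

lemma two_pow_le_balancedFactorialProd_mul {n : ℕ} (hn : 13 ≤ n) :
    (2 : ℝ) ^ n ≤ 1 / (8 * (n + 1)) * balancedFactorialProd n * (12 / n) ^ n := by
  have hn0 : (0 : ℝ) < n := by positivity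
  calc (2 : ℝ) ^ n = 1 / (8 * (n + 1)) * (8 * (n + 1)) * ((n / 6) * (12 / n)) ^ n := by
        rw [show (n : ℝ) / 6 * (12 / n) = 2 by field_simp; ring]
        field_simp
    _ = 1 / (8 * (n + 1)) * (8 * (n + 1) * (n / 6) ^ n) * (12 / n) ^ n := by rw [mul_pow]; ring
    _ ≤ _ := by gcongr; exact le_balancedFactorialProd hn

/-- For `k ≥ 2`, the area of the region `{(x,y) : |P_k(x,y)| ≤ 1}` is less than `16`. -/
theorem Pform_area_lt_sixteen (k : ℕ) (hk : 2 ≤ k) :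
    volume {p : ℝ × ℝ | |Pform k p.1 p.2| ≤ 1} < 16 := by
  obtain ⟨n, rfl⟩ : ∃ n, k = n + 1 := ⟨k - 1, by omega⟩
  change volume (pformRegion (n + 1)) < 16
  rcases (show n ≤ 11 ∨ n = 12 ∨ 13 ≤ n by omega) with hn | rfl | hn
  · refine (volume_pformRegion_le_add_four n).trans_lt (ENNReal.ofReal_lt_ofNat.2 ?_)
    have : (n : ℝ) ≤ 11 := by exact_mod_cast hn
    linarith
  · refine (volume_pformRegion_le 12 (t := 9 / 10) (R := 1 / 30) (by norm_num) (by norm_num)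
      (by norm_num [balancedFactorialProd, factorial])).trans_lt (ENNReal.ofReal_lt_ofNat.2 ?_)
    norm_num
  · have hn' : (13 : ℝ) ≤ n := by exact_mod_cast hn
    refine (volume_pformRegion_le n (by positivity) (by positivity)
      (two_pow_le_balancedFactorialProd_mul hn)).trans_lt (ENNReal.ofReal_lt_ofNat.2 ?_)
    have : (n : ℝ) * (12 / n) ^ 2 + 4 * (12 / n) + 4 * (n + 1) * (1 / (8 * (n + 1)))
        = 192 / n + 1 / 2 := by
      field_simp
      ring
    rw [this, div_add' _ _ _ (by positivity), div_lt_iff₀ (by positivity)]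
    linarith
end

section
/- Let F(X,Y) be a binary form with complex coefficients, of degree n ≥ 3, whose discriminant D_F is non-zero. Then the area A_F of the region {(x,y) ∈ ℝ² : |F(x,y)| ≤ 1} is finite. -/
/-!
Write `F = ∏ Lᵢ` with `Lᵢ(x, y) = αᵢ x - βᵢ y`. Two non-proportional linear forms satisfy
`c ‖p‖ ≤ |Lᵢ p| + |Lⱼ p|` for some `c > 0`, so at any point at most one factor of `F` is smaller
than `c ‖p‖ / 2`. Far from the origin, `|F p| ≤ 1` then forces `|Lᵢ p| ≲ ‖p‖ ^ (1 - n) ≤ ‖p‖ ^ (-2)`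
for some `i` (this is where `n ≥ 3` enters). The set of such points lies in a neighbourhood of a
real line whose width decays like `(1 + |x|) ^ (-2)`, which has finite area because
`∫ (1 + x²)⁻¹ dx < ∞`.
-/

open MeasureTheory Finset
open scoped ENNReal

open Filter Topology

theorem volume_setOf_abs_sub_mul_mul_sq_le_lt_top (t : ℝ) {K : ℝ} (hK : 0 ≤ K) :
    volume {p : ℝ × ℝ | |p.2 - t * p.1| * (1 + |p.1|) ^ 2 ≤ K} < ∞ := by
  have hslice (x : ℝ) : Prod.mk x ⁻¹' {p : ℝ × ℝ | |p.2 - t * p.1| * (1 + |p.1|) ^ 2 ≤ K} =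
      Metric.closedBall (t * x) (K / (1 + |x|) ^ 2) := by
    ext y
    simp [Real.dist_eq, le_div_iff₀ (by positivity : (0 : ℝ) < (1 + |x|) ^ 2)]
  have hle (x : ℝ) : K / (1 + |x|) ^ 2 ≤ K * (1 + x ^ 2)⁻¹ := by
    rw [← div_eq_mul_inv]
    exact div_le_div_of_nonneg_left hK (by positivity) (by nlinarith [abs_nonneg x, sq_abs x])
  rw [Measure.volume_eq_prod, Measure.prod_apply (measurableSet_le (by fun_prop) (by fun_prop))]
  calc ∫⁻ x, volume (Prod.mk x ⁻¹' {p : ℝ × ℝ | |p.2 - t * p.1| * (1 + |p.1|) ^ 2 ≤ K})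
      ≤ ∫⁻ x, ENNReal.ofReal (2 * K * (1 + x ^ 2)⁻¹) := by
        refine lintegral_mono fun x => ?_
        rw [hslice, Real.volume_closedBall, mul_assoc]
        exact ENNReal.ofReal_le_ofReal (by linarith [hle x])
    _ < ∞ := (integrable_inv_one_add_sq.const_mul (2 * K)).lintegral_lt_top

theorem volume_setOf_norm_mul_sub_mul_le_lt_top_of_ne_zero {a b : ℂ} (hb : b ≠ 0) {K : ℝ}
    (hK : 0 ≤ K) : volume {p : ℝ × ℝ | ‖a * p.1 - b * p.2‖ * (1 + ‖p‖) ^ 2 ≤ K} < ∞ := by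
  have hb' : 0 < ‖b‖ := norm_pos_iff.2 hb
  refine (measure_mono fun p (hp : _ ≤ K) => ?_).trans_lt
    (volume_setOf_abs_sub_mul_mul_sq_le_lt_top (a / b).re (div_nonneg hK hb'.le))
  have hre : |p.2 - (a / b).re * p.1| ≤ ‖a / b * p.1 - p.2‖ := by
    rw [abs_sub_comm]
    simpa using Complex.abs_re_le_norm (a / b * p.1 - p.2)
  have hfactor : ‖a * p.1 - b * p.2‖ = ‖b‖ * ‖a / b * p.1 - p.2‖ := by
    rw [← norm_mul]; congr 1; field_simp
  have hnorm : 1 + |p.1| ≤ 1 + ‖p‖ := by simpa using norm_fst_le p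
  change _ ≤ K / ‖b‖
  rw [le_div_iff₀ hb']
  calc |p.2 - (a / b).re * p.1| * (1 + |p.1|) ^ 2 * ‖b‖
      ≤ ‖a / b * p.1 - p.2‖ * (1 + ‖p‖) ^ 2 * ‖b‖ := by gcongr
    _ = ‖a * p.1 - b * p.2‖ * (1 + ‖p‖) ^ 2 := by rw [hfactor]; ring
    _ ≤ K := hp

theorem volume_setOf_norm_mul_sub_mul_le_lt_top {a b : ℂ} (hab : a ≠ 0 ∨ b ≠ 0) {K : ℝ}
    (hK : 0 ≤ K) : volume {p : ℝ × ℝ | ‖a * p.1 - b * p.2‖ * (1 + ‖p‖) ^ 2 ≤ K} < ∞ := by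
  rcases hab with ha | hb
  · have hswap : {p : ℝ × ℝ | ‖a * p.1 - b * p.2‖ * (1 + ‖p‖) ^ 2 ≤ K} =
        Prod.swap ⁻¹' {p : ℝ × ℝ | ‖-b * p.1 - -a * p.2‖ * (1 + ‖p‖) ^ 2 ≤ K} := by
      ext p
      simp only [Set.mem_preimage, Set.mem_ofPred_eq, Prod.fst_swap, Prod.snd_swap, Prod.norm_def,
        max_comm ‖p.2‖]
      ring_nf
    rw [hswap, Measure.volume_eq_prod]
    exact (Measure.measurePreserving_swap.measure_preimage_equiv (f := MeasurableEquiv.prodComm)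
      _).trans_lt (volume_setOf_norm_mul_sub_mul_le_lt_top_of_ne_zero (neg_ne_zero.2 ha) hK)
  · exact volume_setOf_norm_mul_sub_mul_le_lt_top_of_ne_zero hb hK

theorem norm_mul_sub_mul_mul_norm_le (a b a' b' : ℂ) (p : ℝ × ℝ) :
    ‖a * b' - a' * b‖ * ‖p‖ ≤
      (‖a‖ + ‖b‖ + ‖a'‖ + ‖b'‖) * (‖a * p.1 - b * p.2‖ + ‖a' * p.1 - b' * p.2‖) := by
  set L := a * (p.1 : ℂ) - b * p.2
  set L' := a' * (p.1 : ℂ) - b' * p.2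
  have hsum (u v : ℂ) (huv : ‖u‖ + ‖v‖ ≤ ‖a‖ + ‖b‖ + ‖a'‖ + ‖b'‖) :
      ‖u * L - v * L'‖ ≤ (‖a‖ + ‖b‖ + ‖a'‖ + ‖b'‖) * (‖L‖ + ‖L'‖) :=
    calc ‖u * L - v * L'‖ ≤ ‖u‖ * ‖L‖ + ‖v‖ * ‖L'‖ := by
          simpa only [norm_mul] using norm_sub_le (u * L) (v * L')
      _ ≤ (‖u‖ + ‖v‖) * (‖L‖ + ‖L'‖) := by
          nlinarith [norm_nonneg u, norm_nonneg v, norm_nonneg L, norm_nonneg L']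
      _ ≤ _ := by gcongr
  rw [Prod.norm_def, mul_max_of_nonneg _ _ (norm_nonneg _)]
  refine max_le ?_ ?_
  · calc ‖a * b' - a' * b‖ * ‖p.1‖ = ‖b' * L - b * L'‖ := by
          rw [← Complex.norm_real, ← norm_mul]; congr 1; ring
      _ ≤ _ := hsum _ _ (by linarith [norm_nonneg a, norm_nonneg a'])
  · calc ‖a * b' - a' * b‖ * ‖p.2‖ = ‖a' * L - a * L'‖ := by
          rw [← Complex.norm_real, ← norm_mul]; congr 1; ring
      _ ≤ _ := hsum _ _ (by linarith [norm_nonneg b, norm_nonneg b'])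

theorem eventually_mul_norm_le_norm_add_norm {a b a' b' : ℂ} (h : a * b' - a' * b ≠ 0) :
    ∀ᶠ c in 𝓝[>] (0 : ℝ), ∀ p : ℝ × ℝ,
      c * ‖p‖ ≤ ‖a * p.1 - b * p.2‖ + ‖a' * p.1 - b' * p.2‖ := by
  set A := ‖a‖ + ‖b‖ + ‖a'‖ + ‖b'‖
  have hA : 0 < A + 1 := by positivity
  have hc₀ : 0 < ‖a * b' - a' * b‖ / (A + 1) := div_pos (norm_pos_iff.2 h) hA
  filter_upwards [Ioc_mem_nhdsGT hc₀] with c hc p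
  have hsum : 0 ≤ ‖a * p.1 - b * p.2‖ + ‖a' * p.1 - b' * p.2‖ := by positivity
  calc c * ‖p‖ ≤ ‖a * b' - a' * b‖ / (A + 1) * ‖p‖ := by gcongr; exact hc.2
    _ ≤ _ := by
      rw [div_mul_eq_mul_div, div_le_iff₀ hA]
      nlinarith [norm_mul_sub_mul_mul_norm_le a b a' b' p]

theorem exists_forall_ne_half_le {ι : Type*} [Nonempty ι] {f : ι → ℝ} {r : ℝ}
    (h : ∀ i j, i ≠ j → r ≤ f i + f j) : ∃ i, ∀ j ≠ i, r / 2 ≤ f j := by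
  by_contra! H
  obtain ⟨j, -, hj⟩ := H (Classical.arbitrary ι)
  obtain ⟨k, hkj, hk⟩ := H j
  linarith [h k j hkj]

theorem mul_pow_card_sub_one_le_prod {ι : Type*} [Fintype ι] {f : ι → ℝ} {i : ι} {M : ℝ}
    (hi : 0 ≤ f i) (hM : 0 ≤ M) (h : ∀ j ≠ i, M ≤ f j) :
    f i * M ^ (Fintype.card ι - 1) ≤ ∏ j, f j := by
  classical
  rw [← mul_prod_erase univ f (mem_univ i), ← card_univ, ← card_erase_of_mem (mem_univ i),
    ← prod_const]
  gcongr with j hj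
  exact h j (ne_of_mem_erase hj)

section LinearForms

variable {ι : Type*} [Fintype ι] {α β : ι → ℂ}

theorem exists_pos_forall_mul_norm_le_norm_add_norm
    (h : ∀ i j, i ≠ j → α i * β j - α j * β i ≠ 0) :
    ∃ c > 0, ∀ i j, i ≠ j → ∀ p : ℝ × ℝ,
      c * ‖p‖ ≤ ‖α i * p.1 - β i * p.2‖ + ‖α j * p.1 - β j * p.2‖ := by
  have hpairs : ∀ᶠ c in 𝓝[>] (0 : ℝ), ∀ i j, i ≠ j → ∀ p : ℝ × ℝ,
      c * ‖p‖ ≤ ‖α i * p.1 - β i * p.2‖ + ‖α j * p.1 - β j * p.2‖ := by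
    refine eventually_all.2 fun i => eventually_all.2 fun j => ?_
    rcases eq_or_ne i j with rfl | hij
    · exact .of_forall fun _ hii => absurd rfl hii
    · exact (eventually_mul_norm_le_norm_add_norm (h i j hij)).mono fun _ hc _ => hc
  exact (eventually_mem_nhdsWithin.and hpairs).exists

theorem exists_norm_mul_sq_le_of_norm_prod_le_one (hcard : 3 ≤ Fintype.card ι) {c : ℝ}
    (hc : 0 < c) (hpair : ∀ i j, i ≠ j → ∀ p : ℝ × ℝ,
      c * ‖p‖ ≤ ‖α i * p.1 - β i * p.2‖ + ‖α j * p.1 - β j * p.2‖)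
    {p : ℝ × ℝ} (hp : ‖∏ i, (α i * (p.1 : ℂ) - β i * (p.2 : ℂ))‖ ≤ 1) (hp₁ : 1 ≤ ‖p‖)
    (hpc : 2 / c ≤ ‖p‖) :
    ∃ i, ‖α i * p.1 - β i * p.2‖ * (1 + ‖p‖) ^ 2 ≤ 16 / c ^ 2 := by
  have : Nonempty ι := Fintype.card_pos_iff.1 (by omega)
  obtain ⟨i, hi⟩ := exists_forall_ne_half_le fun i j hij => hpair i j hij p
  refine ⟨i, ?_⟩
  have hM : 1 ≤ c * ‖p‖ / 2 := by rw [div_le_iff₀ hc] at hpc; linarith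
  have hsmall : ‖α i * p.1 - β i * p.2‖ * (c * ‖p‖ / 2) ^ 2 ≤ 1 :=
    calc ‖α i * p.1 - β i * p.2‖ * (c * ‖p‖ / 2) ^ 2
        ≤ ‖α i * p.1 - β i * p.2‖ * (c * ‖p‖ / 2) ^ (Fintype.card ι - 1) := by
          gcongr
          omega
      _ ≤ ∏ j, ‖α j * p.1 - β j * p.2‖ :=
          mul_pow_card_sub_one_le_prod (f := fun j => ‖α j * p.1 - β j * p.2‖) (norm_nonneg _)
            (zero_le_one.trans hM) hi
      _ ≤ 1 := by rwa [← norm_prod]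
  calc ‖α i * p.1 - β i * p.2‖ * (1 + ‖p‖) ^ 2
      ≤ ‖α i * p.1 - β i * p.2‖ * (2 * ‖p‖) ^ 2 := by gcongr; linarith
    _ = 16 / c ^ 2 * (‖α i * p.1 - β i * p.2‖ * (c * ‖p‖ / 2) ^ 2) := by
        field_simp; ring
    _ ≤ 16 / c ^ 2 := mul_le_of_le_one_right (by positivity) hsmall

theorem setOf_norm_prod_le_one_subset (hcard : 3 ≤ Fintype.card ι) {c : ℝ} (hc : 0 < c)
    (hpair : ∀ i j, i ≠ j → ∀ p : ℝ × ℝ,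
      c * ‖p‖ ≤ ‖α i * p.1 - β i * p.2‖ + ‖α j * p.1 - β j * p.2‖) :
    {p : ℝ × ℝ | ‖∏ i, (α i * (p.1 : ℂ) - β i * (p.2 : ℂ))‖ ≤ 1} ⊆
      Metric.closedBall 0 (max 1 (2 / c)) ∪
        ⋃ i, {p : ℝ × ℝ | ‖α i * p.1 - β i * p.2‖ * (1 + ‖p‖) ^ 2 ≤ 16 / c ^ 2} := by
  intro p hp
  rcases le_or_gt ‖p‖ (max 1 (2 / c)) with hball | hfar
  · exact Or.inl (mem_closedBall_zero_iff.2 hball)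
  · rw [max_lt_iff] at hfar
    exact Or.inr (Set.mem_iUnion.2
      (exists_norm_mul_sq_le_of_norm_prod_le_one hcard hc hpair hp hfar.1.le hfar.2.le))

theorem volume_setOf_norm_prod_le_one_lt_top (hcard : 3 ≤ Fintype.card ι)
    (h : ∀ i j, i ≠ j → α i * β j - α j * β i ≠ 0) :
    volume {p : ℝ × ℝ | ‖∏ i, (α i * (p.1 : ℂ) - β i * (p.2 : ℂ))‖ ≤ 1} < ∞ := by
  obtain ⟨c, hc, hpair⟩ := exists_pos_forall_mul_norm_le_norm_add_norm h
  have hline (i : ι) : α i ≠ 0 ∨ β i ≠ 0 := by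
    obtain ⟨j, hji⟩ := Fintype.exists_ne_of_one_lt_card (by omega) i
    by_contra! hi
    exact h i j hji.symm (by simp [hi])
  refine (measure_mono (setOf_norm_prod_le_one_subset hcard hc hpair)).trans_lt
    (measure_union_lt_top measure_closedBall_lt_top ?_)
  exact (measure_iUnion_fintype_le _ _).trans_lt (ENNReal.sum_lt_top.2 fun i _ =>
    volume_setOf_norm_mul_sub_mul_le_lt_top (hline i) (by positivity))

end LinearForms

theorem mul_sub_mul_ne_zero_of_discPair_ne_zero {n : ℕ} {α β : Fin n → ℂ}
    (hD : discPair α β ≠ 0) {i j : Fin n} (hij : i ≠ j) : α i * β j - α j * β i ≠ 0 := by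
  have of_lt {i j : Fin n} (hij : i < j) : α i * β j - α j * β i ≠ 0 :=
    ne_zero_pow two_ne_zero <| prod_ne_zero_iff.1 (prod_ne_zero_iff.1 hD i (mem_univ i)) j
      (mem_Ioi.2 hij)
  rcases hij.lt_or_gt with hlt | hgt
  · exact of_lt hlt
  · rw [← neg_ne_zero, neg_sub]
    exact of_lt hgt

/-- Let `F = ∏ i, (α i X - β i Y)` be a binary form with complex coefficients, of degree
`n ≥ 3`, with nonzero discriminant.  Then the area of `{(x,y) ∈ ℝ² : |F(x,y)| ≤ 1}` is
finite. -/
theorem area_finite (n : ℕ) (hn : 3 ≤ n) (α β : Fin n → ℂ) (hD : discPair α β ≠ 0) :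
    volume {p : ℝ × ℝ | ‖∏ i, (α i * (p.1 : ℂ) - β i * (p.2 : ℂ))‖ ≤ 1}
      < ⊤ :=
  volume_setOf_norm_prod_le_one_lt_top (by simpa using hn) fun _ _ hij =>
    mul_sub_mul_ne_zero_of_discPair_ne_zero hD hij
end

section
/- The discriminant of the binary cubic form F(X,Y) = XY(X−Y) equals 1, and hence |D_F|^{1/(3·2)} · A_F = 3·B(1/3,1/3) for this form, where A_F is the area of {(x,y) ∈ ℝ² : |xy(x−y)| ≤ 1} and B denotes the Beta function. -/
/-
The discriminant is read off the coefficients of `F` through the classical formula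
`b²c² - 4ac³ - 4b³d - 27a²d² + 18abcd` for a binary cubic `aX³ + bX²Y + cXY² + dY³`.

For the area, the lines `x = 0`, `y = 0`, `x = y` cut the plane into six sectors, each the image
of the open quadrant under a linear map of determinant `±1` that turns `|xy(x - y)|` into
`ab(a + b)`. On the quadrant the coordinates `(t, s) ↦ s • (t, 1 - t)` have Jacobian `s`, so for
`G` homogeneous of degree `n` the set `{G ≤ 1}` has area `½ ∫₀¹ G(t, 1 - t)^(-2/n) dt`; for
`G = ab(a + b)` this is `½ B(1/3, 1/3)`.
-/

open MeasureTheory Finset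
open scoped ENNReal

theorem discPair_fin_three {α β : Fin 3 → ℂ} {a b c d : ℂ}
    (h : ∀ x y, ∏ i, (α i * x - β i * y)
      = a * x ^ 3 + b * x ^ 2 * y + c * x * y ^ 2 + d * y ^ 3) :
    discPair α β = b ^ 2 * c ^ 2 - 4 * a * c ^ 3 - 4 * b ^ 3 * d - 27 * a ^ 2 * d ^ 2
      + 18 * a * b * c * d := by
  have h10 := h 1 0
  have h01 := h 0 1
  have h11 := h 1 1
  have h1m := h 1 (-1)
  simp only [Fin.prod_univ_three] at h10 h01 h11 h1m
  obtain rfl : a = α 0 * α 1 * α 2 := by linear_combination -h10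
  obtain rfl : d = -(β 0 * β 1 * β 2) := by linear_combination -h01
  obtain rfl : b = -(α 0 * α 1 * β 2 + α 0 * β 1 * α 2 + β 0 * α 1 * α 2) := by
    linear_combination (h1m - h11) / 2
  obtain rfl : c = α 0 * β 1 * β 2 + β 0 * α 1 * β 2 + β 0 * β 1 * α 2 := by
    linear_combination -(h1m + h11) / 2
  simp only [discPair, Fin.prod_univ_three]
  rw [show Finset.Ioi (0 : Fin 3) = {1, 2} by decide, show Finset.Ioi (1 : Fin 3) = {2} by decide,
    show Finset.Ioi (2 : Fin 3) = ∅ by decide]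
  simp only [Finset.prod_insert (by decide : (1 : Fin 3) ∉ ({2} : Finset (Fin 3))),
    Finset.prod_singleton, Finset.prod_empty]
  ring

theorem lintegral_Ioo_rpow_mul_one_sub_rpow {a b : ℝ} (ha : 0 < a) (hb : 0 < b) :
    ∫⁻ t in Set.Ioo 0 1, ENNReal.ofReal (t ^ (a - 1) * (1 - t) ^ (b - 1))
      = ENNReal.ofReal (Beta a b) := by
  -- `Beta` and `ProbabilityTheory.beta` are the same definition.
  have hB : 0 < ProbabilityTheory.beta a b := ProbabilityTheory.beta_pos ha hb
  have h := ProbabilityTheory.lintegral_betaPDF_eq_one ha hb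
  rw [ProbabilityTheory.lintegral_betaPDF] at h
  simp_rw [mul_assoc, ENNReal.ofReal_mul (one_div_pos.2 hB).le] at h
  rw [lintegral_const_mul' _ _ ENNReal.ofReal_ne_top, one_div,
    ENNReal.ofReal_inv_of_pos hB, mul_comm] at h
  exact (ENNReal.eq_inv_of_mul_eq_one_left h).trans (inv_inv _)

noncomputable def segmentCoord (q : ℝ × ℝ) : ℝ × ℝ := q.2 • (q.1, 1 - q.1)

noncomputable def fderivSegmentCoord (q : ℝ × ℝ) : ℝ × ℝ →L[ℝ] ℝ × ℝ :=
  (Matrix.toLin (.finTwoProd ℝ) (.finTwoProd ℝ)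
    !![q.2, q.1; -q.2, 1 - q.1]).toContinuousLinearMap

theorem hasFDerivAt_segmentCoord (q : ℝ × ℝ) :
    HasFDerivAt segmentCoord (fderivSegmentCoord q) q := by
  unfold fderivSegmentCoord
  rw [Matrix.toLin_finTwoProd_toContinuousLinearMap]
  have hfst : HasFDerivAt (fun p : ℝ × ℝ => p.1) (ContinuousLinearMap.fst ℝ ℝ ℝ) q :=
    hasFDerivAt_fst
  have hsnd : HasFDerivAt (fun p : ℝ × ℝ => p.2) (ContinuousLinearMap.snd ℝ ℝ ℝ) q :=
    hasFDerivAt_snd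
  have := (hsnd.mul hfst).prodMk (hsnd.mul (hfst.const_sub 1))
  exact this.congr_fderiv (by ext <;> simp)

theorem det_fderivSegmentCoord (q : ℝ × ℝ) : (fderivSegmentCoord q).det = q.2 := by
  simp only [fderivSegmentCoord, LinearMap.det_toContinuousLinearMap, LinearMap.det_toLin,
    Matrix.det_fin_two_of]
  ring

theorem injOn_segmentCoord : Set.InjOn segmentCoord (Set.Ioo 0 1 ×ˢ Set.Ioi 0) := by
  rintro ⟨t, s⟩ ⟨-, hs⟩ ⟨t', s'⟩ ⟨-, hs'⟩ h
  simp only [segmentCoord, Prod.smul_mk, smul_eq_mul, Prod.mk.injEq] at h hs hs' ⊢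
  have hss : s = s' := by linear_combination h.1 + h.2
  subst hss
  exact ⟨mul_left_cancel₀ hs.ne' h.1, rfl⟩

theorem segmentCoord_image :
    segmentCoord '' (Set.Ioo 0 1 ×ˢ Set.Ioi 0) = Set.Ioi 0 ×ˢ Set.Ioi 0 := by
  ext ⟨x, y⟩
  simp only [Set.mem_image, Set.mem_prod, Set.mem_Ioo, Set.mem_Ioi, segmentCoord, Prod.smul_mk,
    smul_eq_mul, Prod.mk.injEq, Prod.exists]
  constructor
  · rintro ⟨t, s, ⟨⟨ht0, ht1⟩, hs⟩, rfl, rfl⟩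
    exact ⟨by positivity, mul_pos hs (by linarith)⟩
  · rintro ⟨hx, hy⟩
    refine ⟨x / (x + y), x + y, ⟨⟨by positivity, ?_⟩, by positivity⟩, ?_, ?_⟩
    · rw [div_lt_one (by positivity)]; linarith
    · field_simp
    · field_simp; ring

theorem lintegral_Ioc_ofReal {R : ℝ} (hR : 0 ≤ R) :
    ∫⁻ s in Set.Ioc 0 R, ENNReal.ofReal s = ENNReal.ofReal (R ^ 2) / 2 := by
  have hint : IntegrableOn (fun s : ℝ => s) (Set.Ioc 0 R) := continuous_id.integrableOn_Ioc
  rw [← ofReal_integral_eq_lintegral_ofReal hint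
      ((ae_restrict_mem measurableSet_Ioc).mono fun s hs => hs.1.le),
    ← intervalIntegral.integral_of_le hR, integral_id, ENNReal.ofReal_div_of_pos two_pos]
  norm_num

theorem lintegral_Ioi_ofReal_mul_indicator {c : ℝ} (hc : 0 < c) {n : ℕ} (hn : n ≠ 0) :
    ∫⁻ s in Set.Ioi 0, ENNReal.ofReal s * {s : ℝ | s ^ n * c ≤ 1}.indicator 1 s
      = ENNReal.ofReal (c ^ (-(2 : ℝ) / n)) / 2 := by
  have hsub : Set.Ioi 0 ∩ {s : ℝ | s ^ n * c ≤ 1} = Set.Ioc 0 (c ^ (-(1 : ℝ) / n)) := by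
    ext s
    simp only [Set.mem_inter_iff, Set.mem_Ioi, Set.mem_ofPred_eq, Set.mem_Ioc,
      and_congr_right_iff]
    intro hs
    rw [← le_div_iff₀ hc, one_div, ← Real.rpow_le_rpow_iff (by positivity) (by positivity)
      (by positivity : (0 : ℝ) < (n : ℝ)⁻¹), ← Real.rpow_natCast, ← Real.rpow_mul hs.le,
      mul_inv_cancel₀ (by exact_mod_cast hn), Real.rpow_one, ← Real.rpow_neg_one,
      ← Real.rpow_mul hc.le]
    ring_nf
  simp_rw [← Set.indicator_mul_right, Pi.one_apply, mul_one]
  rw [lintegral_indicator (measurableSet_le (by fun_prop) measurable_const),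
    Measure.restrict_restrict (measurableSet_le (by fun_prop) measurable_const), Set.inter_comm,
    hsub, lintegral_Ioc_ofReal (by positivity), ← Real.rpow_natCast, ← Real.rpow_mul hc.le]
  ring_nf

theorem volume_quadrant_sublevel_of_homogeneous {G : ℝ × ℝ → ℝ} (hG : Measurable G)
    {n : ℕ} (hn : n ≠ 0) (hhom : ∀ s > 0, ∀ p, G (s • p) = s ^ n * G p)
    (hpos : ∀ t ∈ Set.Ioo 0 1, 0 < G (t, 1 - t)) :
    volume {p : ℝ × ℝ | 0 < p.1 ∧ 0 < p.2 ∧ G p ≤ 1}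
      = (∫⁻ t in Set.Ioo 0 1, ENNReal.ofReal (G (t, 1 - t) ^ (-(2 : ℝ) / n))) / 2 := by
  have hmeas : MeasurableSet {p : ℝ × ℝ | G p ≤ 1} := measurableSet_le hG measurable_const
  have hset : {p : ℝ × ℝ | 0 < p.1 ∧ 0 < p.2 ∧ G p ≤ 1}
      = {p | G p ≤ 1} ∩ Set.Ioi 0 ×ˢ Set.Ioi 0 := by
    ext p; simp [and_comm, and_assoc]
  rw [hset, ← Measure.restrict_apply hmeas, ← lintegral_indicator_one hmeas,
    ← segmentCoord_image, lintegral_image_eq_lintegral_abs_det_fderiv_mul volume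
      (measurableSet_Ioo.prod measurableSet_Ioi)
      (fun q _ => (hasFDerivAt_segmentCoord q).hasFDerivWithinAt) injOn_segmentCoord,
    Measure.volume_eq_prod]
  simp_rw [det_fderivSegmentCoord]
  rw [setLIntegral_prod, div_eq_mul_inv,
    ← lintegral_mul_const' _ _ (ENNReal.inv_ne_top.2 two_ne_zero)]
  · refine setLIntegral_congr_fun measurableSet_Ioo fun t ht => ?_
    rw [← div_eq_mul_inv, ← lintegral_Ioi_ofReal_mul_indicator (hpos t ht) hn]
    refine setLIntegral_congr_fun measurableSet_Ioi fun s (hs : 0 < s) => ?_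
    simp only [abs_of_pos hs, segmentCoord, Set.indicator_apply, Set.mem_ofPred_eq, hhom s hs,
      Pi.one_apply]
  · have : Measurable segmentCoord := by unfold segmentCoord; fun_prop
    exact (measurable_snd.abs.ennreal_ofReal.mul
      ((measurable_const.indicator hmeas).comp this)).aemeasurable

section AddHaar

variable {E : Type*} [NormedAddCommGroup E] [NormedSpace ℝ E] [MeasurableSpace E] [BorelSpace E]
  [FiniteDimensional ℝ E] (μ : Measure E) [μ.IsAddHaarMeasure]

theorem addHaar_preimage_linearMap_of_abs_det_eq_one {f : E →ₗ[ℝ] E}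
    (hf : |LinearMap.det f| = 1) (s : Set E) : μ (f ⁻¹' s) = μ s := by
  rw [Measure.addHaar_preimage_linearMap μ (by rintro h; simp [h] at hf), abs_inv, hf]
  simp

theorem addHaar_ker_eq_zero {f : E →ₗ[ℝ] ℝ} (hf : f ≠ 0) : μ (LinearMap.ker f) = 0 :=
  Measure.addHaar_submodule μ _ (mt LinearMap.ker_eq_top.1 hf)

end AddHaar

def sector : Fin 6 → Set (ℝ × ℝ) :=
  ![{p | 0 < p.2 ∧ p.2 < p.1}, {p | 0 < p.1 ∧ p.1 < p.2}, {p | p.2 < 0 ∧ 0 < p.1},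
    {p | p.1 < 0 ∧ 0 < p.2}, {p | p.1 < p.2 ∧ p.2 < 0}, {p | p.2 < p.1 ∧ p.1 < 0}]

noncomputable def sectorMatrix : Fin 6 → Matrix (Fin 2) (Fin 2) ℝ :=
  ![!![1, 1; 0, 1], !![0, 1; 1, 1], !![1, 0; 0, -1],
    !![-1, 0; 0, 1], !![-1, -1; 0, -1], !![0, -1; -1, -1]]

noncomputable def sectorMap (i : Fin 6) : ℝ × ℝ →ₗ[ℝ] ℝ × ℝ :=
  Matrix.toLin (.finTwoProd ℝ) (.finTwoProd ℝ) (sectorMatrix i)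

theorem measurableSet_sector (i : Fin 6) : MeasurableSet (sector i) := by
  fin_cases i <;>
    simp only [sector, Fin.reduceFinMk, Fin.zero_eta, Fin.mk_one, Matrix.cons_val,
      Set.ofPred_and] <;>
    exact (measurableSet_lt (by fun_prop) (by fun_prop)).inter
      (measurableSet_lt (by fun_prop) (by fun_prop))

open Function in
theorem pairwise_disjoint_sector : Pairwise (Disjoint on sector) := by
  intro i j hij
  fin_cases i <;> fin_cases j <;> simp only [onFun] <;>
    first
    | exact absurd rfl hij
    | exact Set.disjoint_left.2 fun p hi hj => by simp [sector] at hi hj; linarith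

theorem volume_compl_iUnion_sector : volume (⋃ i, sector i)ᶜ = 0 := by
  have hcover : (⋃ i, sector i)ᶜ ⊆ LinearMap.ker (LinearMap.fst ℝ ℝ ℝ) ∪
      LinearMap.ker (LinearMap.snd ℝ ℝ ℝ) ∪
      LinearMap.ker (LinearMap.fst ℝ ℝ ℝ - LinearMap.snd ℝ ℝ ℝ) := by
    rintro ⟨x, y⟩ hp
    by_contra hlines
    refine hp (Set.mem_iUnion.2 ?_)
    simp only [Set.mem_union, SetLike.mem_coe, LinearMap.mem_ker, LinearMap.sub_apply,
      LinearMap.fst_apply, LinearMap.snd_apply, sub_eq_zero, not_or] at hlines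
    simp only [sector, Fin.exists_fin_succ, Fin.isValue, Matrix.cons_val_zero, Set.mem_ofPred_eq,
      Matrix.cons_val_succ, Matrix.cons_val_fin_one, exists_const]
    rcases lt_trichotomy x 0 with hx | hx | hx <;> rcases lt_trichotomy y 0 with hy | hy | hy <;>
      rcases lt_trichotomy x y with hxy | hxy | hxy <;> tauto
  refine measure_mono_null hcover (measure_union_null (measure_union_null ?_ ?_) ?_) <;>
    refine addHaar_ker_eq_zero _ fun h => ?_
  · simpa using LinearMap.congr_fun h (1, 0)
  · simpa using LinearMap.congr_fun h (0, 1)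
  · simpa using LinearMap.congr_fun h (1, 0)

theorem abs_det_sectorMap (i : Fin 6) : |LinearMap.det (sectorMap i)| = 1 := by
  fin_cases i <;> simp [sectorMap, sectorMatrix, LinearMap.det_toLin, Matrix.det_fin_two_of]

theorem sectorMap_preimage_sector (i : Fin 6) :
    sectorMap i ⁻¹' sector i = Set.Ioi 0 ×ˢ Set.Ioi 0 := by
  ext ⟨a, b⟩
  fin_cases i <;> simp [sectorMap, sectorMatrix, sector] <;> tauto

theorem abs_mul_mul_sub_sectorMap (i : Fin 6) (q : ℝ × ℝ) :
    |(sectorMap i q).1 * (sectorMap i q).2 * ((sectorMap i q).1 - (sectorMap i q).2)|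
      = |q.1 * q.2 * (q.1 + q.2)| := by
  fin_cases i <;>
    simp only [sectorMap, sectorMatrix, Matrix.toLin_finTwoProd_apply, Fin.reduceFinMk,
      Fin.zero_eta, Fin.mk_one, Matrix.cons_val] <;>
    first | (congr 1; ring1) | (rw [← abs_neg]; congr 1; ring1)

theorem volume_inter_sector (i : Fin 6) :
    volume ({p : ℝ × ℝ | |p.1 * p.2 * (p.1 - p.2)| ≤ 1} ∩ sector i)
      = volume {p : ℝ × ℝ | 0 < p.1 ∧ 0 < p.2 ∧ p.1 * p.2 * (p.1 + p.2) ≤ 1} := by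
  rw [← addHaar_preimage_linearMap_of_abs_det_eq_one volume (abs_det_sectorMap i),
    Set.preimage_inter, sectorMap_preimage_sector]
  congr 1
  ext q
  simp only [Set.mem_inter_iff, Set.mem_preimage, Set.mem_ofPred_eq, abs_mul_mul_sub_sectorMap,
    Set.mem_prod, Set.mem_Ioi]
  constructor
  · rintro ⟨hle, ha, hb⟩
    exact ⟨ha, hb, (le_abs_self _).trans hle⟩
  · rintro ⟨ha, hb, hle⟩
    exact ⟨by rwa [abs_of_pos (by positivity)], ha, hb⟩

theorem volume_abs_mul_mul_sub_le_one :
    volume {p : ℝ × ℝ | |p.1 * p.2 * (p.1 - p.2)| ≤ 1}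
      = 6 * volume {p : ℝ × ℝ | 0 < p.1 ∧ 0 < p.2 ∧ p.1 * p.2 * (p.1 + p.2) ≤ 1} := by
  have hS : MeasurableSet {p : ℝ × ℝ | |p.1 * p.2 * (p.1 - p.2)| ≤ 1} :=
    measurableSet_le (by fun_prop) measurable_const
  rw [← measure_inter_conull volume_compl_iUnion_sector, Set.inter_iUnion,
    measure_iUnion (pairwise_disjoint_sector.mono fun i j h => h.mono Set.inter_subset_right
      Set.inter_subset_right) fun i => hS.inter (measurableSet_sector i), tsum_fintype]
  simp only [volume_inter_sector, Finset.sum_const, Finset.card_univ, Fintype.card_fin,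
    nsmul_eq_mul, Nat.cast_ofNat]

theorem volume_quadrant_mul_mul_add_le_one :
    volume {p : ℝ × ℝ | 0 < p.1 ∧ 0 < p.2 ∧ p.1 * p.2 * (p.1 + p.2) ≤ 1}
      = ENNReal.ofReal (Beta (1 / 3) (1 / 3)) / 2 := by
  rw [volume_quadrant_sublevel_of_homogeneous (G := fun p => p.1 * p.2 * (p.1 + p.2)) (n := 3)
    (by fun_prop) three_ne_zero
    (fun s _ p => by simp only [Prod.smul_fst, Prod.smul_snd, smul_eq_mul]; ring)
    fun t ht => by
      simp only [add_sub_cancel, mul_one]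
      exact mul_pos ht.1 (sub_pos.2 ht.2),
    ← lintegral_Ioo_rpow_mul_one_sub_rpow (by norm_num) (by norm_num)]
  congr 1
  refine setLIntegral_congr_fun measurableSet_Ioo fun t ht => ?_
  rw [add_sub_cancel, mul_one, Real.mul_rpow ht.1.le (by linarith [ht.2])]
  norm_num

/-- The discriminant of the binary cubic form `F(X,Y) = XY(X-Y)` (computed from any
factorization of `F` into linear forms) equals `1`, and hence
`|D_F|^(1/6) · A_F = 3·B(1/3,1/3)` for this form. -/
theorem disc_xy_x_sub_y_eq_one (α β : Fin 3 → ℂ)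
    (hfac : ∀ x y : ℂ, ∏ i, (α i * x - β i * y) = x * y * (x - y)) :
    discPair α β = 1 ∧
    ENNReal.ofReal (‖discPair α β‖ ^ ((1 : ℝ) / 6))
        * volume {p : ℝ × ℝ | |p.1 * p.2 * (p.1 - p.2)| ≤ 1}
      = ENNReal.ofReal (3 * Beta (1/3) (1/3)) := by
  have hdisc : discPair α β = 1 := by
    rw [discPair_fin_three (a := 0) (b := 1) (c := -1) (d := 0) fun x y => by rw [hfac]; ring]
    norm_num
  refine ⟨hdisc, ?_⟩
  rw [hdisc, norm_one, Real.one_rpow, ENNReal.ofReal_one, one_mul, volume_abs_mul_mul_sub_le_one,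
    volume_quadrant_mul_mul_add_le_one, ENNReal.ofReal_mul (by norm_num), ENNReal.ofReal_ofNat,
    show (6 : ℝ≥0∞) = 3 * 2 by norm_num, mul_assoc,
    ENNReal.mul_div_cancel two_ne_zero ENNReal.ofNat_ne_top]
end
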